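/- arXiv:2504.13064 — 8 statements merged into one kernel-verified Lean document; each statement's English description precedes it below -/
import Mathlib

section
/- Let n be a positive integer and let Q be an n×n symmetric positive definite matrix with rational entries. Then there exist a positive rational number c, a finite nonempty family Y₁,…,Y_N of vectors in ℤⁿ, and nonnegative real numbers c₁,…,c_N with c₁+⋯+c_N = 1, such that Yⱼᵗ(cQ)Yⱼ = 1 for every j and c₁·Y₁Y₁ᵗ + ⋯ + c_N·Y_NY_Nᵗ = (1/n)·(cQ)⁻¹. (This is the matrix-data form of: up to a dilation, every rational flat n-torus admits a minimal isometric immersion into some sphere.) -/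
set_option maxHeartbeats 1000000
open Matrix BigOperators

lemma lemB (a b β : ℚ) (ha : 0 < a) (hb : 0 < b) :
    ∃ m : ℚ, 2*(a - 2*a*β*m - b*m^2)^2 < (a + b*m^2)^2 := by
  set F : ℝ → ℝ := fun s => 2*((a:ℝ) - 2*(a:ℝ)*(β:ℝ)*s - (b:ℝ)*s^2)^2 - ((a:ℝ) + (b:ℝ)*s^2)^2 with hF
  have ha' : (0:ℝ) < (a:ℝ) := by exact_mod_cast ha
  have hb' : (0:ℝ) < (b:ℝ) := by exact_mod_cast hb
  have hFc : Continuous F := by fun_prop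
  set s0 : ℝ := (-(a:ℝ)*(β:ℝ) + Real.sqrt (((a:ℝ)*(β:ℝ))^2 + (a:ℝ)*(b:ℝ)))/(b:ℝ) with hs0
  have h1 : (b:ℝ) * s0 + (a:ℝ)*(β:ℝ) = Real.sqrt (((a:ℝ)*(β:ℝ))^2 + (a:ℝ)*(b:ℝ)) := by
    rw [hs0]; field_simp; ring
  have h2 : ((b:ℝ)*s0 + (a:ℝ)*(β:ℝ))^2 = ((a:ℝ)*(β:ℝ))^2 + (a:ℝ)*(b:ℝ) := by
    rw [h1, Real.sq_sqrt]; positivity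
  have hroot : (a:ℝ) - 2*(a:ℝ)*(β:ℝ)*s0 - (b:ℝ)*s0^2 = 0 := by nlinarith [h2]
  have hneg : F s0 < 0 := by
    rw [hF]; simp only; rw [hroot]
    have : (0:ℝ) < ((a:ℝ) + (b:ℝ)*s0^2)^2 := by positivity
    nlinarith
  have hopen : IsOpen {s : ℝ | F s < 0} := isOpen_lt hFc continuous_const
  obtain ⟨ε, hε, hball⟩ := Metric.isOpen_iff.mp hopen s0 hneg
  obtain ⟨m, hm⟩ := exists_rat_near s0 hε
  have hmF : F (m:ℝ) < 0 := hball (by rw [Metric.mem_ball, Real.dist_eq, abs_sub_comm]; exact hm)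
  refine ⟨m, ?_⟩
  rw [hF] at hmF; simp only at hmF
  have h' : 2*((a:ℝ) - 2*(a:ℝ)*(β:ℝ)*(m:ℝ) - (b:ℝ)*(m:ℝ)^2)^2 < ((a:ℝ) + (b:ℝ)*(m:ℝ)^2)^2 := by
    linarith
  exact_mod_cast h'

lemma hprod {N' : ℕ} (f : Fin 4 → ℚ) (g : Fin N' → ℚ) :
    (∑ p : Fin 4 × Fin N', f p.1 * g p.2) = (∑ s, f s) * (∑ j, g j) := by
  rw [Fintype.sum_prod_type]
  simp_rw [← Finset.mul_sum]
  rw [← Finset.sum_mul]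

lemma lemA : ∀ (n : ℕ), 0 < n → ∀ (q : Fin n → ℚ), (∀ i, 0 < q i) →
    ∃ t : ℚ, 0 < t ∧ ∃ N : ℕ, 0 < N ∧ ∃ (b : Fin N → Fin n → ℚ) (w : Fin N → ℚ),
      (∀ j, 0 ≤ w j) ∧ (∑ j, w j) = 1 ∧
      (∀ j, ∑ i, q i * (b j i)^2 = t) ∧
      (∀ i k, ∑ j, w j * (b j i * b j k) = if i = k then t / (n * q i) else 0) := by
  intro n
  induction n with
  | zero => intro h; omega
  | succ n ih =>
    intro _ q hq
    rcases Nat.eq_zero_or_pos n with hn0 | hn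
    · subst hn0
      refine ⟨q 0, hq 0, 1, one_pos, fun _ _ => 1, fun _ => 1, fun j => zero_le_one, ?_, ?_, ?_⟩
      · simp
      · intro j; simp [Fin.sum_univ_one]
      · intro i k
        have hi : i = 0 := Fin.eq_zero i
        have hk : k = 0 := Fin.eq_zero k
        subst hi; subst hk
        have h0 : q 0 ≠ 0 := ne_of_gt (hq 0)
        simp [Fin.sum_univ_one]
        field_simp
    · obtain ⟨t', ht', N', hN', b', w', hw0', hw1', hnrm', hmom'⟩ :=
        ih hn (fun i => q i.succ) (fun i => hq i.succ)
      have hnQ : (1:ℚ) ≤ (n:ℚ) := by exact_mod_cast hn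
      obtain ⟨a, hadef⟩ : ∃ a:ℚ, a = q 0 := ⟨_, rfl⟩
      have ha : 0 < a := by rw [hadef]; exact hq 0
      obtain ⟨r, hr⟩ : ∃ r:ℚ, r = t' / ((n:ℚ) * a) := ⟨_, rfl⟩
      have hrpos : 0 < r := by rw [hr]; positivity
      obtain ⟨β, hβdef⟩ : ∃ β:ℚ, β = r / (r+1) := ⟨_, rfl⟩
      have hβpos : 0 < β := by rw [hβdef]; positivity
      have hβ : β^2 < r := by
        rw [hβdef, div_pow, div_lt_iff₀ (by positivity)]
        nlinarith
      have hnaβ : (n:ℚ) * a * β^2 < t' := by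
        rw [hr, lt_div_iff₀ (by positivity)] at hβ
        linarith
      obtain ⟨t, htdef⟩ : ∃ t:ℚ, t = a*β^2 + t' := ⟨_, rfl⟩
      have ht : 0 < t := by rw [htdef]; positivity
      obtain ⟨m, hm⟩ := lemB a t' β ha ht'
      obtain ⟨D, hD⟩ : ∃ D:ℚ, D = a + t'*m^2 := ⟨_, rfl⟩
      have hDpos : 0 < D := by rw [hD]; positivity
      obtain ⟨x, hx⟩ : ∃ x:ℚ, x = (t'*β*m^2 - 2*t'*m - a*β)/D := ⟨_, rfl⟩
      obtain ⟨y, hy⟩ : ∃ y:ℚ, y = (a - 2*a*β*m - t'*m^2)/D := ⟨_, rfl⟩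
      have hconic : a*x^2 + t'*y^2 = t := by
        rw [hx, hy, htdef, hD]; field_simp; ring
      have hy2 : y^2 < 1/2 := by
        rw [hy, hD, div_pow, div_lt_iff₀ (by positivity)]
        nlinarith [hm]
      obtain ⟨θ, hθ⟩ : ∃ θ:ℚ, θ = t / (((n:ℚ)+1) * a) := ⟨_, rfl⟩
      have hθpos : 0 < θ := by rw [hθ]; positivity
      have hu : β^2 < θ := by
        rw [hθ, lt_div_iff₀ (by positivity)]
        nlinarith
      have hxθ : θ < x^2 := by
        have h1 : t' * y^2 < t'/2 := by nlinarith
        have h2 : a * x^2 > t/2 := by nlinarith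
        have h3 : t/(((n:ℚ)+1)*a) ≤ t/(2*a) := by
          apply div_le_div_of_nonneg_left (le_of_lt ht) (by positivity)
          nlinarith
        rw [hθ]
        calc t / (((n:ℚ)+1)*a) ≤ t/(2*a) := h3
          _ < x^2 := by rw [div_lt_iff₀ (by positivity)]; nlinarith
      obtain ⟨lam, hlam⟩ : ∃ l:ℚ, l = (θ - β^2)/(x^2 - β^2) := ⟨_, rfl⟩
      have hxβ : β^2 < x^2 := lt_trans hu hxθ
      have hne2 : x^2 - β^2 ≠ 0 := ne_of_gt (by linarith)
      have hlam0 : 0 ≤ lam := by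
        rw [hlam]; apply div_nonneg <;> linarith
      have hlam1 : lam ≤ 1 := by
        rw [hlam, div_le_one (by linarith)]; linarith
      have hlamx : lam * x^2 + (1-lam)*β^2 = θ := by
        rw [hlam]; field_simp; ring
      have hconic' : a*β^2 + t'*(1:ℚ)^2 = t := by rw [htdef]; ring
      have hlamy : t' * (lam * y^2 + (1-lam) * 1) = (n:ℚ)*t/((n:ℚ)+1) := by
        have e1 : a*(lam*x^2 + (1-lam)*β^2) + t'*(lam*y^2 + (1-lam)*1) = t := by
          linear_combination lam * hconic + (1-lam) * hconic'
        rw [hlamx] at e1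
        have e3 : a*θ = t/((n:ℚ)+1) := by
          rw [hθ]; field_simp
        have h4 : t - t/((n:ℚ)+1) = (n:ℚ)*t/((n:ℚ)+1) := by
          field_simp; ring
        linarith
      -- abbreviations for the four-point family
      obtain ⟨S1, hS1d⟩ : ∃ v:ℚ, v = lam*(x*x) + (1-lam)*(β*β) := ⟨_, rfl⟩
      have hS1 : S1 = θ := by rw [hS1d]; linear_combination hlamx
      obtain ⟨S3, hS3d⟩ : ∃ v:ℚ, v = lam*(y*y) + (1-lam)*(1*1) := ⟨_, rfl⟩
      have e3' : ((n:ℚ)+1)*(a*θ) = t := by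
        have hn1 : ((n:ℚ)+1) ≠ 0 := by positivity
        rw [hθ]; field_simp
      have hS3 : ((n:ℚ)+1) * (t' * S3) = (n:ℚ)*t := by
        rw [hS3d]
        have e2 : a*θ + t'*(lam*y^2 + (1-lam)*1) = t := by
          rw [← hlamx]; linear_combination lam * hconic + (1-lam) * hconic'
        linear_combination ((n:ℚ)+1)*e2 - e3' + ((n:ℚ)+1)*t'*(by ring : lam*(y*y) + (1-lam)*(1*1) = lam*y^2 + (1-lam)*1)
      -- the family
      refine ⟨t, ht, 4*N', by positivity, ?_⟩
      have e := finProdFinEquiv (m := 4) (n := N')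
      obtain ⟨X4, hX4⟩ : ∃ v : Fin 4 → ℚ, v = ![x, -x, β, -β] := ⟨_, rfl⟩
      obtain ⟨Y4, hY4⟩ : ∃ v : Fin 4 → ℚ, v = ![y, y, 1, 1] := ⟨_, rfl⟩
      obtain ⟨W4, hW4⟩ : ∃ v : Fin 4 → ℚ, v = ![lam/2, lam/2, (1-lam)/2, (1-lam)/2] := ⟨_, rfl⟩
      have hW4nn : ∀ s, 0 ≤ W4 s := by
        intro s; fin_cases s <;> simp [hW4] <;> linarith
      have hW4sum : ∑ s, W4 s = 1 := by
        rw [hW4, Fin.sum_univ_four]; simp; try ring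
      have hKey : ∀ s, a * (X4 s)^2 + t' * (Y4 s)^2 = t := by
        intro s; fin_cases s <;> simp [hX4, hY4] <;> first | linear_combination hconic | linear_combination -htdef | linear_combination htdef
      have hSS1 : ∑ s, W4 s * (X4 s * X4 s) = S1 := by
        rw [hW4, hX4, hS1d, Fin.sum_univ_four]; simp; try ring
      have hSS2 : ∑ s, W4 s * (X4 s * Y4 s) = 0 := by
        rw [hW4, hX4, hY4, Fin.sum_univ_four]; simp; try ring
      have hSS3 : ∑ s, W4 s * (Y4 s * Y4 s) = S3 := by
        rw [hW4, hY4, hS3d, Fin.sum_univ_four]; simp; try ring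
      refine ⟨fun j => Fin.cons (X4 (e.symm j).1) (fun i => Y4 (e.symm j).1 * b' (e.symm j).2 i),
              fun j => W4 (e.symm j).1 * w' (e.symm j).2, ?_, ?_, ?_, ?_⟩
      · intro j; exact mul_nonneg (hW4nn _) (hw0' _)
      · refine Eq.trans (Fintype.sum_equiv e.symm _ (fun p => W4 p.1 * w' p.2) (fun j => rfl)) ?_
        rw [hprod W4 w', hW4sum, hw1', mul_one]
      · -- norms
        intro j
        rw [Fin.sum_univ_succ]
        simp only [Fin.cons_zero, Fin.cons_succ]
        have hsub : ∑ i : Fin n, q i.succ * (Y4 (e.symm j).1 * b' (e.symm j).2 i)^2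
            = (Y4 (e.symm j).1)^2 * t' := by
          rw [← hnrm' (e.symm j).2, Finset.mul_sum]
          apply Finset.sum_congr rfl; intro i _; ring
        rw [hsub, ← hadef]
        linear_combination hKey (e.symm j).1
      · -- second moments
        intro i k
        induction i using Fin.cases with
        | zero =>
          induction k using Fin.cases with
          | zero =>
            refine Eq.trans (Fintype.sum_equiv e.symm _
                (fun p => (fun s => W4 s * (X4 s * X4 s)) p.1 * w' p.2)
                (fun j => by simp only [Fin.cons_zero]; ring)) ?_
            rw [hprod (fun s => W4 s * (X4 s * X4 s)) w']
            simp only [hw1', mul_one]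
            rw [hSS1, hS1, hθ, ← hadef]
            simp only [eq_self_iff_true, if_true]
            push_cast
            ring
          | succ k' =>
            refine Eq.trans (Fintype.sum_equiv e.symm _
                (fun p => (fun s => W4 s * (X4 s * Y4 s)) p.1 * (fun j' => w' j' * b' j' k') p.2)
                (fun j => by simp only [Fin.cons_zero, Fin.cons_succ]; ring)) ?_
            rw [hprod (fun s => W4 s * (X4 s * Y4 s)) (fun j' => w' j' * b' j' k')]
            rw [hSS2, zero_mul, if_neg (Ne.symm (Fin.succ_ne_zero k'))]
        | succ i' =>
          induction k using Fin.cases with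
          | zero =>
            refine Eq.trans (Fintype.sum_equiv e.symm _
                (fun p => (fun s => W4 s * (X4 s * Y4 s)) p.1 * (fun j' => w' j' * b' j' i') p.2)
                (fun j => by simp only [Fin.cons_zero, Fin.cons_succ]; ring)) ?_
            rw [hprod (fun s => W4 s * (X4 s * Y4 s)) (fun j' => w' j' * b' j' i')]
            rw [hSS2, zero_mul, if_neg (Fin.succ_ne_zero i')]
          | succ k' =>
            refine Eq.trans (Fintype.sum_equiv e.symm _
                (fun p => (fun s => W4 s * (Y4 s * Y4 s)) p.1 * (fun j' => w' j' * (b' j' i' * b' j' k')) p.2)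
                (fun j => by simp only [Fin.cons_succ]; ring)) ?_
            rw [hprod (fun s => W4 s * (Y4 s * Y4 s)) (fun j' => w' j' * (b' j' i' * b' j' k'))]
            rw [hSS3, hmom' i' k']
            by_cases hik : i' = k'
            · subst hik
              rw [if_pos rfl, if_pos rfl]
              have hqi : 0 < q i'.succ := hq i'.succ
              have hn' : (0:ℚ) < (n:ℚ) := by exact_mod_cast hn
              have hn1' : (0:ℚ) < ((n+1:ℕ):ℚ) := by exact_mod_cast Nat.succ_pos n
              rw [← mul_div_assoc,
                div_eq_div_iff (ne_of_gt (mul_pos hn' hqi)) (ne_of_gt (mul_pos hn1' hqi))]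
              push_cast
              linear_combination q i'.succ * hS3
            · rw [if_neg hik, if_neg (by simpa [Fin.succ_inj] using hik), mul_zero]

open Matrix BigOperators

lemma lemQ (n : ℕ) (hn : 0 < n) (Qq : Matrix (Fin n) (Fin n) ℚ)
    (hsym : ∀ i j, Qq i j = Qq j i)
    (hpos : ∀ x : Fin n → ℚ, x ≠ 0 → 0 < x ⬝ᵥ Qq *ᵥ x) :
    ∃ t : ℚ, 0 < t ∧ ∃ N : ℕ, 0 < N ∧ ∃ (aq : Fin N → Fin n → ℚ) (w : Fin N → ℚ),
      (∀ j, 0 ≤ w j) ∧ (∑ j, w j) = 1 ∧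
      (∀ j, aq j ⬝ᵥ (Qq *ᵥ aq j) = t) ∧
      (∀ i k, ∑ l, (∑ j, w j * (aq j i * aq j l)) * Qq l k
          = t/(n:ℚ) * (if i = k then 1 else 0)) := by
  have hdots : ∀ x y : Fin n → ℚ, x ⬝ᵥ Qq *ᵥ y = y ⬝ᵥ Qq *ᵥ x := by
    intro x y
    simp only [dotProduct, Matrix.mulVec, Finset.mul_sum]
    rw [Finset.sum_comm]
    apply Finset.sum_congr rfl; intro i _
    apply Finset.sum_congr rfl; intro j _
    rw [hsym i j]; ring
  have hBapp : ∀ x y : Fin n → ℚ, Matrix.toBilin' Qq x y = x ⬝ᵥ Qq *ᵥ y :=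
    fun x y => Matrix.toBilin'_apply' Qq x y
  have hBsymm : LinearMap.IsSymm (Matrix.toBilin' Qq) := by
    refine ⟨fun x y => ?_⟩
    simp only [RingHom.id_apply, hBapp]
    exact hdots x y
  haveI : Invertible (2:ℚ) := invertibleOfNonzero two_ne_zero
  obtain ⟨v0, hv0⟩ := LinearMap.BilinForm.exists_orthogonal_basis hBsymm
  have hrank : Module.finrank ℚ (Fin n → ℚ) = n := Module.finrank_fin_fun ℚ
  set v : Module.Basis (Fin n) ℚ (Fin n → ℚ) := v0.reindex (finCongr hrank) with hvdef
  have hv : ∀ i k : Fin n, i ≠ k → (v i) ⬝ᵥ Qq *ᵥ (v k) = 0 := by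
    intro i k hik
    have h := hv0 (i := (finCongr hrank).symm i) (j := (finCongr hrank).symm k)
      (fun hc => hik (by simpa using congrArg (finCongr hrank) hc))
    have h' : Matrix.toBilin' Qq (v0 ((finCongr hrank).symm i)) (v0 ((finCongr hrank).symm k)) = 0 := h
    rw [hBapp] at h'
    simpa [hvdef, Module.Basis.reindex_apply] using h'
  set d : Fin n → ℚ := fun i => (v i) ⬝ᵥ Qq *ᵥ (v i) with hddef
  have hd : ∀ i, 0 < d i := fun i => hpos (v i) (v.ne_zero i)
  obtain ⟨t, ht, N, hN, b, w, hw0, hw1, hnrm, hmom⟩ := lemA n hn d hd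
  set aq : Fin N → Fin n → ℚ := fun j => ∑ i, b j i • v i with haqdef
  have haqi : ∀ j i, aq j i = ∑ p, b j p * v p i := by
    intro j i
    rw [haqdef]
    simp [Finset.sum_apply]
  have hBvv : ∀ i k : Fin n, (v i) ⬝ᵥ Qq *ᵥ (v k) = if i = k then d i else 0 := by
    intro i k
    by_cases h : i = k
    · subst h; rw [if_pos rfl, hddef]
    · rw [if_neg h]; exact hv i k h
  have haqv : ∀ j k, aq j ⬝ᵥ (Qq *ᵥ v k) = b j k * d k := by
    intro j k
    have e1 : aq j ⬝ᵥ (Qq *ᵥ v k) = ∑ p, b j p * ((v p) ⬝ᵥ (Qq *ᵥ v k)) := by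
      simp only [dotProduct]
      calc ∑ i, aq j i * (Qq *ᵥ v k) i
          = ∑ i, (∑ p, b j p * v p i) * (Qq *ᵥ v k) i := by
            apply Finset.sum_congr rfl; intro i _; rw [haqi]
        _ = ∑ i, ∑ p, b j p * (v p i * (Qq *ᵥ v k) i) := by
            apply Finset.sum_congr rfl; intro i _
            rw [Finset.sum_mul]; apply Finset.sum_congr rfl; intro p _; ring
        _ = ∑ p, ∑ i, b j p * (v p i * (Qq *ᵥ v k) i) := Finset.sum_comm
        _ = ∑ p, b j p * ∑ i, v p i * (Qq *ᵥ v k) i := by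
            apply Finset.sum_congr rfl; intro p _; rw [Finset.mul_sum]
    rw [e1]
    calc ∑ p, b j p * ((v p) ⬝ᵥ (Qq *ᵥ v k))
        = ∑ p, b j p * (if p = k then d p else 0) := by
          apply Finset.sum_congr rfl; intro p _; rw [hBvv]
      _ = b j k * d k := by
          rw [Finset.sum_eq_single k]
          · simp
          · intro p _ hp; rw [if_neg hp, mul_zero]
          · intro h; exact absurd (Finset.mem_univ k) h
  have hnrm2 : ∀ j, aq j ⬝ᵥ (Qq *ᵥ aq j) = t := by
    intro j
    have e2 : aq j ⬝ᵥ (Qq *ᵥ aq j) = ∑ k, b j k * (aq j ⬝ᵥ (Qq *ᵥ v k)) := by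
      rw [hdots]
      simp only [dotProduct]
      calc ∑ i, aq j i * (Qq *ᵥ aq j) i
          = ∑ i, (∑ p, b j p * v p i) * (Qq *ᵥ aq j) i := by
            apply Finset.sum_congr rfl; intro i _; rw [haqi]
        _ = ∑ i, ∑ p, b j p * (v p i * (Qq *ᵥ aq j) i) := by
            apply Finset.sum_congr rfl; intro i _
            rw [Finset.sum_mul]; apply Finset.sum_congr rfl; intro p _; ring
        _ = ∑ p, ∑ i, b j p * (v p i * (Qq *ᵥ aq j) i) := Finset.sum_comm
        _ = ∑ p, b j p * ∑ i, v p i * (Qq *ᵥ aq j) i := by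
            apply Finset.sum_congr rfl; intro p _; rw [Finset.mul_sum]
        _ = ∑ p, b j p * (aq j ⬝ᵥ (Qq *ᵥ v p)) := by
            apply Finset.sum_congr rfl; intro p _
            congr 1
            exact (hdots (v p) (aq j))
    rw [e2]
    calc ∑ k, b j k * (aq j ⬝ᵥ (Qq *ᵥ v k))
        = ∑ k, b j k * (b j k * d k) := by
          apply Finset.sum_congr rfl; intro k _; rw [haqv]
      _ = ∑ k, d k * (b j k)^2 := by
          apply Finset.sum_congr rfl; intro k _; ring
      _ = t := hnrm j
  obtain ⟨Mq, hMqdef⟩ : ∃ M : Matrix (Fin n) (Fin n) ℚ,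
      M = Matrix.of (fun i l => ∑ j, w j * (aq j i * aq j l)) := ⟨_, rfl⟩
  have hnne : (n:ℚ) ≠ 0 := by
    have : (0:ℚ) < (n:ℚ) := by exact_mod_cast hn
    exact ne_of_gt this
  have hact : ∀ k, (Mq * Qq) *ᵥ (v k) = (t/(n:ℚ)) • (v k) := by
    intro k
    obtain ⟨g, hg⟩ : ∃ g, g = Qq *ᵥ v k := ⟨_, rfl⟩
    funext i
    have lhs1 : ((Mq * Qq) *ᵥ (v k)) i = ∑ l, (∑ j, w j * (aq j i * aq j l)) * g l := by
      rw [← Matrix.mulVec_mulVec, ← hg]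
      simp [Matrix.mulVec, dotProduct, hMqdef]
    rw [lhs1]
    have dk := hd k
    calc ∑ l, (∑ j, w j * (aq j i * aq j l)) * g l
        = ∑ l, ∑ j, (w j * aq j i) * (aq j l * g l) := by
          apply Finset.sum_congr rfl; intro l _
          rw [Finset.sum_mul]; apply Finset.sum_congr rfl; intro j _; ring
      _ = ∑ j, ∑ l, (w j * aq j i) * (aq j l * g l) := Finset.sum_comm
      _ = ∑ j, (w j * aq j i) * (aq j ⬝ᵥ g) := by
          apply Finset.sum_congr rfl; intro j _
          rw [dotProduct, Finset.mul_sum]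
      _ = ∑ j, (w j * aq j i) * (b j k * d k) := by
          apply Finset.sum_congr rfl; intro j _
          rw [hg, haqv]
      _ = ∑ j, ∑ p, (w j * (b j k * b j p)) * (d k * v p i) := by
          apply Finset.sum_congr rfl; intro j _
          rw [haqi, Finset.mul_sum, Finset.sum_mul]
          apply Finset.sum_congr rfl; intro p _; ring
      _ = ∑ p, ∑ j, (w j * (b j k * b j p)) * (d k * v p i) := Finset.sum_comm
      _ = ∑ p, (∑ j, w j * (b j k * b j p)) * (d k * v p i) := by
          apply Finset.sum_congr rfl; intro p _
          rw [Finset.sum_mul]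
      _ = ∑ p, (if k = p then t/((n:ℚ) * d k) else 0) * (d k * v p i) := by
          apply Finset.sum_congr rfl; intro p _
          rw [hmom k p]
      _ = (t/((n:ℚ) * d k)) * (d k * v k i) := by
          rw [Finset.sum_eq_single k]
          · rw [if_pos rfl]
          · intro p _ hp; rw [if_neg (Ne.symm hp), zero_mul]
          · intro h; exact absurd (Finset.mem_univ k) h
      _ = (t/(n:ℚ)) * v k i := by
          field_simp
      _ = ((t/(n:ℚ)) • (v k)) i := by
          simp
  have hMQ : Mq * Qq = (t/(n:ℚ)) • (1 : Matrix (Fin n) (Fin n) ℚ) := by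
    apply Matrix.toLin'.injective
    apply Module.Basis.ext v
    intro k
    rw [Matrix.toLin'_apply, Matrix.toLin'_apply, hact k]
    rw [Matrix.smul_mulVec, Matrix.one_mulVec]
  refine ⟨t, ht, N, hN, aq, w, hw0, hw1, hnrm2, ?_⟩
  intro i k
  have h2 := congrFun (congrFun hMQ i) k
  rw [Matrix.mul_apply] at h2
  simpa [hMqdef, Matrix.smul_apply, Matrix.one_apply, mul_ite] using h2
lemma int_of_den_dvd (q : ℚ) (L : ℕ) (h : q.den ∣ L) : ∃ z : ℤ, (L:ℚ) * q = (z:ℚ) := by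
  obtain ⟨k, hk⟩ := h
  refine ⟨q.num * k, ?_⟩
  have hden : ((q.den:ℚ)) ≠ 0 := by exact_mod_cast q.den_nz
  have hq := Rat.num_div_den q
  have hnum : (q.num:ℚ) = q * (q.den:ℚ) := (div_eq_iff hden).mp hq
  have hLcast : (L:ℚ) = (q.den:ℚ) * (k:ℚ) := by exact_mod_cast congrArg (Nat.cast : ℕ → ℚ) hk
  push_cast
  rw [hLcast, hnum]
  ring

/-- **Matrix-data form of: up to a dilation, every rational flat `n`-torus admits a
minimal isometric immersion into some sphere.**
If `Q` is an `n × n` symmetric positive definite matrix with rational entries, then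
there exist a positive rational `c`, a nonempty finite family `Y₁, …, Y_N` of integer
vectors, and nonnegative reals `c₁, …, c_N` summing to `1`, with `Yⱼᵗ (cQ) Yⱼ = 1` for
all `j` and `∑ cⱼ • Yⱼ Yⱼᵗ = (1/n) (cQ)⁻¹`. -/
theorem rational_torus_admits_minimal_immersion
    (n : ℕ) (hn : 0 < n) (Q : Matrix (Fin n) (Fin n) ℝ)
    (hQ : Q.PosDef) (hQrat : ∀ i j, ∃ q : ℚ, Q i j = (q : ℝ)) :
    ∃ (c : ℚ), 0 < c ∧
    ∃ (N : ℕ), 0 < N ∧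
    ∃ (Y : Fin N → Fin n → ℤ) (w : Fin N → ℝ),
      (∀ j, 0 ≤ w j) ∧ (∑ j, w j) = 1 ∧
      (∀ j, (fun i => (Y j i : ℝ)) ⬝ᵥ (((c : ℝ) • Q) *ᵥ fun i => (Y j i : ℝ)) = 1) ∧
      (∑ j, w j • vecMulVec (fun i => (Y j i : ℝ)) (fun i => (Y j i : ℝ)))
        = (n : ℝ)⁻¹ • ((c : ℝ) • Q)⁻¹ := by
  choose f hf using hQrat
  obtain ⟨Qq, hQq⟩ : ∃ M : Matrix (Fin n) (Fin n) ℚ, ∀ i j, Q i j = ((M i j : ℚ):ℝ) :=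
    ⟨Matrix.of f, hf⟩
  have hsym : ∀ i j, Qq i j = Qq j i := by
    intro i j
    have h1 : Q j i = Q i j := by
      conv_lhs => rw [← hQ.1]
      simp [Matrix.conjTranspose_apply]
    have h2 : ((Qq j i : ℚ):ℝ) = ((Qq i j : ℚ):ℝ) := by rw [← hQq, ← hQq, h1]
    exact_mod_cast h2.symm
  have hpos : ∀ x : Fin n → ℚ, x ≠ 0 → 0 < x ⬝ᵥ Qq *ᵥ x := by
    intro x hx
    have hxr0 : (fun i => ((x i : ℚ):ℝ)) ≠ 0 := by
      intro hc
      apply hx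
      funext i
      have h3 := congrFun hc i
      simp only [Pi.zero_apply] at h3
      exact_mod_cast h3
    have hp := hQ.dotProduct_mulVec_pos hxr0
    rw [star_trivial] at hp
    have hcast : ((x ⬝ᵥ Qq *ᵥ x : ℚ):ℝ) = (fun i => ((x i : ℚ):ℝ)) ⬝ᵥ Q *ᵥ (fun i => ((x i : ℚ):ℝ)) := by
      simp only [dotProduct, Matrix.mulVec]
      push_cast
      apply Finset.sum_congr rfl; intro i _
      congr 1
      apply Finset.sum_congr rfl; intro k _
      rw [hQq]
    have : (0:ℝ) < ((x ⬝ᵥ Qq *ᵥ x : ℚ):ℝ) := by rw [hcast]; exact hp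
    exact_mod_cast this
  obtain ⟨t, ht, N, hN, aq, w, hw0, hw1, hnrm, hmomQ⟩ := lemQ n hn Qq hsym hpos
  obtain ⟨L, hLpos, hLdvd⟩ : ∃ L : ℕ, 0 < L ∧ ∀ j i, (aq j i).den ∣ L := by
    refine ⟨∏ j, ∏ i, (aq j i).den, ?_, ?_⟩
    · apply Finset.prod_pos; intro j _; apply Finset.prod_pos; intro i _; exact (aq j i).den_pos
    · intro j i
      exact dvd_trans (Finset.dvd_prod_of_mem (fun i => (aq j i).den) (Finset.mem_univ i))
        (Finset.dvd_prod_of_mem (fun j => ∏ i, (aq j i).den) (Finset.mem_univ j))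
  have hLQ : (0:ℚ) < (L:ℚ) := by exact_mod_cast hLpos
  have hint : ∀ j i, ∃ z : ℤ, ((L:ℚ) * aq j i) = (z:ℚ) := fun j i => int_of_den_dvd _ _ (hLdvd j i)
  choose Y hY using hint
  have hYr : ∀ j i, ((Y j i : ℤ):ℝ) = (((L:ℚ) * aq j i : ℚ):ℝ) := by
    intro j i
    rw [show ((Y j i : ℤ):ℝ) = (((Y j i : ℤ):ℚ):ℝ) by push_cast; ring, ← hY j i]
  obtain ⟨c, hcdef⟩ : ∃ c:ℚ, c = 1/((L:ℚ)^2 * t) := ⟨_, rfl⟩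
  have hc : 0 < c := by rw [hcdef]; positivity
  have hnne : (n:ℚ) ≠ 0 := by
    have : (0:ℚ) < (n:ℚ) := by exact_mod_cast hn
    exact ne_of_gt this
  have hnneR : (n:ℝ) ≠ 0 := by exact_mod_cast Nat.pos_iff_ne_zero.mp hn
  refine ⟨c, hc, N, hN, Y, (fun j => ((w j : ℚ):ℝ)), ?_, ?_, ?_, ?_⟩
  · intro j
    show (0:ℝ) ≤ ((w j : ℚ):ℝ)
    exact_mod_cast hw0 j
  · show ∑ j, ((w j : ℚ):ℝ) = 1
    rw [show (1:ℝ) = ((1:ℚ):ℝ) by norm_cast, ← hw1]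
    push_cast
    rfl
  · -- norms
    intro j
    have hnrmexp : aq j ⬝ᵥ (Qq *ᵥ aq j) = ∑ i, aq j i * (∑ k, Qq i k * aq j k) := rfl
    have hQnorm : ∑ i, ((L:ℚ) * aq j i) * (∑ k, (c * Qq i k) * ((L:ℚ) * aq j k)) = 1 := by
      have hS : ∑ i, ((L:ℚ) * aq j i) * (∑ k, (c * Qq i k) * ((L:ℚ) * aq j k))
          = c * (L:ℚ)^2 * (∑ i, aq j i * (∑ k, Qq i k * aq j k)) := by
        rw [Finset.mul_sum]
        apply Finset.sum_congr rfl; intro i _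
        rw [Finset.mul_sum, Finset.mul_sum, Finset.mul_sum]
        apply Finset.sum_congr rfl; intro k _
        ring
      rw [hS, ← hnrmexp, hnrm j, hcdef]
      field_simp
    calc (fun i => (Y j i : ℝ)) ⬝ᵥ (((c : ℝ) • Q) *ᵥ fun i => (Y j i : ℝ))
        = ∑ i, (((L:ℚ) * aq j i : ℚ):ℝ) * (∑ k, (((c * Qq i k : ℚ)):ℝ) * (((L:ℚ) * aq j k : ℚ):ℝ)) := by
          simp only [dotProduct, Matrix.mulVec, Matrix.smul_apply, smul_eq_mul]
          apply Finset.sum_congr rfl; intro i _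
          rw [hYr]
          congr 1
          apply Finset.sum_congr rfl; intro k _
          rw [hYr, hQq]
          push_cast
          ring
      _ = ((∑ i, ((L:ℚ) * aq j i) * (∑ k, (c * Qq i k) * ((L:ℚ) * aq j k)) : ℚ):ℝ) := by
          push_cast
          rfl
      _ = 1 := by rw [hQnorm]; norm_cast
  · -- the matrix identity
    have hfinalQ : ∀ i k, (∑ l, ((n:ℚ) * (∑ j, w j * (((L:ℚ)*aq j i) * ((L:ℚ)*aq j l)))) * (c * Qq l k))
        = (if i = k then 1 else 0) := by
      intro i k
      have e1 : ∑ l, ((n:ℚ) * (∑ j, w j * (((L:ℚ)*aq j i) * ((L:ℚ)*aq j l)))) * (c * Qq l k)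
          = (n:ℚ) * c * (L:ℚ)^2 * (∑ l, (∑ j, w j * (aq j i * aq j l)) * Qq l k) := by
        rw [Finset.mul_sum]
        apply Finset.sum_congr rfl; intro l _
        have e2 : ∑ j, w j * (((L:ℚ)*aq j i) * ((L:ℚ)*aq j l))
            = (L:ℚ)^2 * ∑ j, w j * (aq j i * aq j l) := by
          rw [Finset.mul_sum]
          apply Finset.sum_congr rfl; intro p _
          ring
        rw [e2]
        ring
      rw [e1, hmomQ i k, hcdef]
      by_cases hik : i = k
      · rw [if_pos hik]
        field_simp
      · rw [if_neg hik]
        ring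
    have h1 : (((n:ℝ)) • (∑ j, ((w j : ℚ):ℝ) • vecMulVec (fun i => (Y j i : ℝ)) (fun i => (Y j i : ℝ))))
        * ((c:ℝ) • Q) = 1 := by
      ext i k
      rw [Matrix.mul_apply]
      have lhs1 : ∀ l, ((((n:ℝ)) • (∑ j, ((w j : ℚ):ℝ) • vecMulVec (fun i => (Y j i : ℝ)) (fun i => (Y j i : ℝ)))) i l)
          = (n:ℝ) * (∑ j, ((w j : ℚ):ℝ) * ((Y j i : ℝ) * (Y j l : ℝ))) := by
        intro l
        simp [Matrix.smul_apply, Matrix.sum_apply, Matrix.vecMulVec_apply, smul_eq_mul]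
      calc ∑ l, ((((n:ℝ)) • (∑ j, ((w j : ℚ):ℝ) • vecMulVec (fun i => (Y j i : ℝ)) (fun i => (Y j i : ℝ)))) i l)
            * (((c:ℝ) • Q) l k)
          = ∑ l, ((n:ℝ) * (∑ j, ((w j : ℚ):ℝ) * ((((L:ℚ)*aq j i:ℚ)):ℝ) * ((((L:ℚ)*aq j l:ℚ)):ℝ)))
              * (((c * Qq l k : ℚ)):ℝ) := by
            apply Finset.sum_congr rfl; intro l _
            rw [lhs1 l]
            congr 1
            · congr 1
              apply Finset.sum_congr rfl; intro j _
              rw [hYr, hYr]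
              ring
            · rw [Matrix.smul_apply, smul_eq_mul, hQq]
              push_cast
              ring
        _ = ((∑ l, ((n:ℚ) * (∑ j, w j * (((L:ℚ)*aq j i) * ((L:ℚ)*aq j l)))) * (c * Qq l k) : ℚ):ℝ) := by
            push_cast
            apply Finset.sum_congr rfl; intro l _
            congr 2
            apply Finset.sum_congr rfl; intro p _
            ring
        _ = (1 : Matrix (Fin n) (Fin n) ℝ) i k := by
            rw [hfinalQ i k, Matrix.one_apply]
            by_cases hik : i = k
            · rw [if_pos hik, if_pos hik]; norm_cast
            · rw [if_neg hik, if_neg hik]; norm_cast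
    have h2 : ((c:ℝ) • Q)⁻¹
        = (n:ℝ) • (∑ j, ((w j : ℚ):ℝ) • vecMulVec (fun i => (Y j i : ℝ)) (fun i => (Y j i : ℝ))) :=
      Matrix.inv_eq_left_inv h1
    rw [h2, smul_smul, inv_mul_cancel₀ hnneR, one_smul]
end

section
/- Let n be a positive integer and let Q be an n×n symmetric positive definite matrix with rational entries. Then there exist infinitely many positive rational numbers c such that one can find vectors Y₁,…,Y_N ∈ ℤⁿ with N ≤ n(n+1)/2 and nonnegative reals c₁,…,c_N with c₁+⋯+c_N = 1, satisfying Yⱼᵗ(cQ)Yⱼ = 1 for every j and c₁·Y₁Y₁ᵗ + ⋯ + c_N·Y_NY_Nᵗ = (1/n)·(cQ)⁻¹. (Matrix-data form of: every rational flat n-torus admits, for infinitely many k, a minimal immersion into the sphere S^{n²+n−1} realized by the k-th eigenfunctions.) -/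
open Matrix BigOperators

set_option maxHeartbeats 1000000

private lemma vmv_pair_sum {n : ℕ} (x y : Fin n → ℝ) :
    vecMulVec (x + y) (x + y) + vecMulVec (x - y) (x - y)
      = (2:ℝ) • vecMulVec x x + (2:ℝ) • vecMulVec y y := by
  ext i j
  simp only [Matrix.add_apply, Matrix.smul_apply, vecMulVec_apply, Pi.add_apply, Pi.sub_apply,
    smul_eq_mul]
  ring

private lemma vmv_smul_sq {n : ℕ} (a : ℝ) (x : Fin n → ℝ) :
    vecMulVec (a • x) (a • x) = (a ^ 2) • vecMulVec x x := by
  ext i j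
  simp only [Matrix.smul_apply, vecMulVec_apply, Pi.smul_apply, smul_eq_mul]
  ring

private lemma den_dvd_int (x : ℚ) (d : ℕ) (hd : x.den ∣ d) : ∃ z : ℤ, (d : ℚ) * x = (z : ℚ) := by
  obtain ⟨t, ht⟩ := hd
  refine ⟨(t : ℤ) * x.num, ?_⟩
  have hden : ((x.den : ℚ)) ≠ 0 := by exact_mod_cast x.den_pos.ne'
  have h1 : (x.den : ℚ) * x = (x.num : ℚ) := by
    have h2 := Rat.num_div_den x
    rw [div_eq_iff hden] at h2
    rw [mul_comm]
    exact h2.symm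
  rw [ht]
  push_cast
  rw [mul_comm ((x.den:ℚ)) ((t:ℚ)), mul_assoc, h1]

private lemma exists_rat_pair (n : ℕ) (hn : 0 < n) (q0 qs : ℚ) (h0 : 0 < q0) (hs : 0 < qs) :
    ∃ a b : ℚ, q0 * a ^ 2 + qs * b ^ 2 = q0 ∧ a ^ 2 * n ≤ 1 ∧ a ^ 2 < 1 := by
  have hnR : (1:ℝ) ≤ (n:ℝ) := by exact_mod_cast hn
  have h0R : (0:ℝ) < (q0:ℝ) := by exact_mod_cast h0
  have hsR : (0:ℝ) < (qs:ℝ) := by exact_mod_cast hs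
  set c : ℝ := (q0 : ℝ) / (qs : ℝ) with hc
  have hcpos : 0 < c := by positivity
  have hcqs : (qs:ℝ) * c = (q0:ℝ) := by rw [hc]; field_simp
  set s : ℝ := Real.sqrt c with hsdef
  have hspos : 0 < s := Real.sqrt_pos.2 hcpos
  have hs2 : s ^ 2 = c := Real.sq_sqrt hcpos.le
  have hθ1 : (0:ℝ) < 1 / (2 * n) := by positivity
  have hθ2 : 1 / (2 * (n:ℝ)) ≤ 1 / 2 := by
    apply one_div_le_one_div_of_le <;> nlinarith
  obtain ⟨u, hu1, hu2⟩ := exists_rat_btwn (show s * (1 - 1/(2*(n:ℝ))) < s by nlinarith)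
  have hlb : (0:ℝ) < s * (1 - 1/(2*(n:ℝ))) := by nlinarith
  have hupos : (0:ℝ) < (u:ℝ) := lt_trans hlb hu1
  have huQ : (0:ℚ) < u := by exact_mod_cast hupos
  have husq : (u:ℝ)^2 < c := by nlinarith
  have husq2 : c * (1 - 1/(n:ℝ)) ≤ (u:ℝ)^2 := by
    have e1 : (s * (1 - 1/(2*(n:ℝ))))^2 ≤ (u:ℝ)^2 := by nlinarith
    have e2 : (s * (1 - 1/(2*(n:ℝ))))^2 = c * (1 - 1/(n:ℝ) + (1/(2*(n:ℝ)))^2) := by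
      rw [mul_pow, hs2]
      congr 1
      have hn0 : (n:ℝ) ≠ 0 := by positivity
      field_simp
      ring
    have e3 : c * (1 - 1/(n:ℝ)) ≤ c * (1 - 1/(n:ℝ) + (1/(2*(n:ℝ)))^2) := by nlinarith [sq_nonneg (1/(2*(n:ℝ)))]
    calc c * (1 - 1/(n:ℝ)) ≤ (s * (1 - 1/(2*(n:ℝ))))^2 := by rw [e2]; exact e3
    _ ≤ _ := e1
  set X : ℚ := qs * u ^ 2 with hX
  have hXpos : 0 < X := by positivity
  have hXR : (X:ℝ) = (qs:ℝ) * (u:ℝ)^2 := by rw [hX]; push_cast; ring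
  have hXle : (X:ℝ) ≤ (q0:ℝ) := by
    rw [hXR, ← hcqs]
    nlinarith
  have hXge : (q0:ℝ) * (1 - 1/(n:ℝ)) ≤ (X:ℝ) := by
    rw [hXR, ← hcqs]
    have h1 : (1:ℝ) - 1/(n:ℝ) ≥ 0 := by
      have : 1/(n:ℝ) ≤ 1 := by
        apply div_le_one_of_le₀ <;> linarith
      linarith
    calc (qs:ℝ) * c * (1 - 1/(n:ℝ)) = (qs:ℝ) * (c * (1 - 1/(n:ℝ))) := by ring
    _ ≤ (qs:ℝ) * (u:ℝ)^2 := by nlinarith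
  have hkeyR : (n:ℝ) * ((X:ℝ) - (q0:ℝ))^2 ≤ ((X:ℝ) + (q0:ℝ))^2 := by
    have hn0 : (0:ℝ) < (n:ℝ) := by linarith
    have h1 : 0 ≤ (q0:ℝ) - (X:ℝ) := by linarith
    have h2 : (n:ℝ) * ((q0:ℝ) - (X:ℝ)) ≤ (q0:ℝ) := by
      have := mul_le_mul_of_nonneg_left hXge hn0.le
      have hexp : (n:ℝ) * ((q0:ℝ) * (1 - 1/(n:ℝ))) = (n:ℝ) * (q0:ℝ) - (q0:ℝ) := by
        field_simp
      nlinarith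
    have hXnn : (0:ℝ) ≤ (X:ℝ) := by exact_mod_cast hXpos.le
    nlinarith
  have hkey : (n:ℚ) * (X - q0)^2 ≤ (X + q0)^2 := by exact_mod_cast hkeyR
  have hd : 0 < X + q0 := by positivity
  refine ⟨(X - q0) / (X + q0), 2 * q0 * u / (X + q0), ?_, ?_, ?_⟩
  · field_simp [hX]
    ring
  · rw [div_pow, div_mul_eq_mul_div, div_le_one (by positivity)]
    calc (X - q0)^2 * (n:ℚ) = (n:ℚ) * (X - q0)^2 := by ring
    _ ≤ (X + q0)^2 := hkey
  · rw [div_pow, div_lt_one (by positivity)]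
    nlinarith

/-- **Matrix-data form of: every rational flat `n`-torus admits, for infinitely many `k`,
a minimal immersion into the sphere `S^{n²+n−1}` realized by the `k`-th eigenfunctions.**
For a symmetric positive definite rational matrix `Q`, there are infinitely many positive
rationals `c` for which a matrix data `(cQ, Y)` with at most `n(n+1)/2` integer vectors
exists. -/
theorem infinitely_many_dilations_with_minimal_immersion_small_target
    (n : ℕ) (hn : 0 < n) (Q : Matrix (Fin n) (Fin n) ℝ)
    (hQ : Q.PosDef) (hQrat : ∀ i j, ∃ q : ℚ, Q i j = (q : ℝ)) :
    {c : ℚ | 0 < c ∧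
      ∃ (N : ℕ), N ≤ n * (n + 1) / 2 ∧
      ∃ (Y : Fin N → Fin n → ℤ) (w : Fin N → ℝ),
        (∀ j, 0 ≤ w j) ∧ (∑ j, w j) = 1 ∧
        (∀ j, (fun i => (Y j i : ℝ)) ⬝ᵥ (((c : ℝ) • Q) *ᵥ fun i => (Y j i : ℝ)) = 1) ∧
        (∑ j, w j • vecMulVec (fun i => (Y j i : ℝ)) (fun i => (Y j i : ℝ)))
          = (n : ℝ)⁻¹ • ((c : ℝ) • Q)⁻¹}.Infinite := by
  classical
  obtain ⟨m, rfl⟩ : ∃ m, n = m + 1 := ⟨n - 1, (Nat.succ_pred_eq_of_pos hn).symm⟩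
  choose Q' hQ' using hQrat
  set Qq : Matrix (Fin (m+1)) (Fin (m+1)) ℚ := Matrix.of Q' with hQqdef
  have hQq : ∀ i j, Q i j = ((Qq i j : ℚ) : ℝ) := hQ'
  -- casting the quadratic form
  have cast_form : ∀ x y : Fin (m+1) → ℚ,
      ((x ⬝ᵥ Qq *ᵥ y : ℚ) : ℝ) = (fun i => (x i : ℝ)) ⬝ᵥ Q *ᵥ (fun i => (y i : ℝ)) := by
    intro x y
    simp only [dotProduct, mulVec, hQq]
    push_cast
    rfl
  -- positive definiteness over ℚ
  have hQqpos : ∀ x : Fin (m+1) → ℚ, x ≠ 0 → 0 < x ⬝ᵥ Qq *ᵥ x := by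
    intro x hx
    have hxR : (fun i => ((x i : ℚ) : ℝ)) ≠ 0 := by
      intro h
      apply hx
      funext i
      have h2 : ((x i : ℚ) : ℝ) = 0 := by simpa using congrFun h i
      exact_mod_cast h2
    have h1 : (0:ℝ) < (fun i => ((x i : ℚ):ℝ)) ⬝ᵥ Q *ᵥ (fun i => ((x i : ℚ):ℝ)) := by
      simpa using hQ.dotProduct_mulVec_pos hxR
    have h2 : (0:ℝ) < ((x ⬝ᵥ Qq *ᵥ x : ℚ) : ℝ) := by rw [cast_form]; exact h1
    exact_mod_cast h2
  -- symmetry over ℚ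
  have hQqsym : ∀ i j, Qq i j = Qq j i := by
    intro i j
    have h1 : Q j i = Q i j := by
      conv_lhs => rw [← hQ.1]
      simp [Matrix.conjTranspose_apply]
    rw [hQq i j, hQq j i] at h1
    exact_mod_cast h1.symm
  set B := Matrix.toBilin' Qq with hB
  have hBsymm : B.IsSymm := by
    refine LinearMap.BilinForm.isSymm_def.2 fun x y => ?_
    simp only [RingHom.id_apply, hB, Matrix.toBilin'_apply]
    rw [Finset.sum_comm]
    refine Finset.sum_congr rfl fun i _ => Finset.sum_congr rfl fun j _ => ?_
    rw [hQqsym j i]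
    ring
  obtain ⟨b0, hb0⟩ := LinearMap.BilinForm.exists_orthogonal_basis (LinearMap.BilinForm.isSymm_iff.1 hBsymm)
  have hrank : Module.finrank ℚ (Fin (m+1) → ℚ) = m + 1 := Module.finrank_fin_fun ℚ
  set b : Module.Basis (Fin (m+1)) ℚ (Fin (m+1) → ℚ) := b0.reindex (finCongr hrank) with hbdef
  set v : Fin (m+1) → (Fin (m+1) → ℚ) := fun i => b i with hv
  have horth : ∀ i j, i ≠ j → v i ⬝ᵥ Qq *ᵥ v j = 0 := by
    intro i j hij
    have h1 : B (b i) (b j) = 0 := by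
      rw [hbdef, Module.Basis.reindex_apply, Module.Basis.reindex_apply]
      exact hb0 (fun h => hij (by simpa using congrArg (finCongr hrank) h))
    rw [hB, Matrix.toBilin'_apply'] at h1
    exact h1
  set q : Fin (m+1) → ℚ := fun i => v i ⬝ᵥ Qq *ᵥ v i with hq
  have hqpos : ∀ i, 0 < q i := fun i => hQqpos _ (b.ne_zero i)
  -- real versions
  set V : Fin (m+1) → (Fin (m+1) → ℝ) := fun i k => ((v i k : ℚ) : ℝ) with hV
  have hqR : ∀ i, V i ⬝ᵥ Q *ᵥ V i = ((q i : ℚ) : ℝ) := by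
    intro i
    have h := cast_form (v i) (v i)
    rw [hq]
    exact h.symm
  have horthR : ∀ i j, i ≠ j → V i ⬝ᵥ Q *ᵥ V j = 0 := by
    intro i j hij
    have h := cast_form (v i) (v j)
    rw [horth i j hij] at h
    simpa [hV] using h.symm
  -- the matrix T and inverse formula
  set T : Matrix (Fin (m+1)) (Fin (m+1)) ℝ := Matrix.of (fun i j => V i j) with hT
  have hTentry : ∀ i j, (T * Q * Tᵀ) i j = V i ⬝ᵥ Q *ᵥ V j := by
    intro i j
    simp only [Matrix.mul_apply, Matrix.transpose_apply, hT, Matrix.of_apply, dotProduct, mulVec,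
      Finset.sum_mul, Finset.mul_sum]
    rw [Finset.sum_comm]
    refine Finset.sum_congr rfl fun l _ => Finset.sum_congr rfl fun k _ => ?_
    ring
  have hT1 : T * Q * Tᵀ = Matrix.diagonal (fun i => ((q i : ℚ) : ℝ)) := by
    ext i j
    rw [hTentry]
    by_cases h : i = j
    · subst h
      rw [Matrix.diagonal_apply_eq]
      exact hqR i
    · rw [Matrix.diagonal_apply_ne _ h]
      exact horthR i j h
  set Tq : Matrix (Fin (m+1)) (Fin (m+1)) ℚ := Matrix.of (fun i j => v i j) with hTqdef
  have hTmap : T = (Rat.castHom ℝ).mapMatrix Tq := by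
    ext i j
    simp [hT, hTqdef, hV, RingHom.mapMatrix_apply, Matrix.map_apply]
  have hTqdet : Tq.det ≠ 0 := by
    have h1 : Tqᵀ = (Pi.basisFun ℚ (Fin (m+1))).toMatrix (⇑b) := by
      ext i j
      simp [Matrix.transpose_apply, hTqdef, Module.Basis.toMatrix_apply, Pi.basisFun_repr, hv]
    have hinv : Invertible ((Pi.basisFun ℚ (Fin (m+1))).toMatrix (⇑b)) :=
      (Pi.basisFun ℚ (Fin (m+1))).invertibleToMatrix b
    have h2 : IsUnit ((Pi.basisFun ℚ (Fin (m+1))).toMatrix (⇑b)).det :=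
      Matrix.isUnit_det_of_invertible _
    rw [← h1, Matrix.det_transpose] at h2
    exact h2.ne_zero
  have hTdet : IsUnit T.det := by
    have h1 : T.det = ((Tq.det : ℚ) : ℝ) := by
      rw [hTmap, ← RingHom.map_det]
      rfl
    rw [h1]
    simp only [isUnit_iff_ne_zero, ne_eq, Rat.cast_eq_zero]
    exact hTqdet
  set P : Matrix (Fin (m+1)) (Fin (m+1)) ℝ :=
    ∑ i, (((q i : ℚ) : ℝ))⁻¹ • vecMulVec (V i) (V i) with hP
  have hPT : P = Tᵀ * Matrix.diagonal (fun i => (((q i : ℚ) : ℝ))⁻¹) * T := by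
    ext j k
    rw [hP, Matrix.sum_apply]
    rw [Matrix.mul_apply]
    simp only [Matrix.mul_diagonal, Matrix.transpose_apply, hT, Matrix.of_apply,
      Matrix.smul_apply, vecMulVec_apply, smul_eq_mul]
    refine Finset.sum_congr rfl fun i _ => ?_
    ring
  have hPQ : P * Q = 1 := by
    have hdetT : IsUnit Tᵀ.det := by rw [Matrix.det_transpose]; exact hTdet
    have h2 : P * Q * Tᵀ = Tᵀ := by
      rw [hPT]
      have e1 : Tᵀ * Matrix.diagonal (fun i => (((q i : ℚ) : ℝ))⁻¹) * T * Q * Tᵀ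
          = Tᵀ * Matrix.diagonal (fun i => (((q i : ℚ) : ℝ))⁻¹) * (T * Q * Tᵀ) := by
        simp only [Matrix.mul_assoc]
      rw [e1, hT1, Matrix.mul_assoc, Matrix.diagonal_mul_diagonal]
      have : (fun i => (((q i : ℚ) : ℝ))⁻¹ * ((q i : ℚ) : ℝ)) = fun _ => (1:ℝ) := by
        funext i
        have : ((q i : ℚ) : ℝ) ≠ 0 := by exact_mod_cast (hqpos i).ne'
        field_simp
      rw [this, Matrix.diagonal_one, Matrix.mul_one]
    calc P * Q = P * Q * (Tᵀ * Tᵀ⁻¹) := by rw [Matrix.mul_nonsing_inv _ hdetT, Matrix.mul_one]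
    _ = (P * Q * Tᵀ) * Tᵀ⁻¹ := by rw [← Matrix.mul_assoc]
    _ = Tᵀ * Tᵀ⁻¹ := by rw [h2]
    _ = 1 := Matrix.mul_nonsing_inv _ hdetT
  -- pair data for each i : Fin m
  choose a β hab habA2 habA1 using fun i : Fin m =>
    exists_rat_pair (m+1) (Nat.succ_pos m) (q 0) (q i.succ) (hqpos 0) (hqpos i.succ)
  set A : Fin m → ℝ := fun i => ((a i : ℚ) : ℝ) with hA
  set Bt : Fin m → ℝ := fun i => ((β i : ℚ) : ℝ) with hBt
  have habR : ∀ i, ((q 0 : ℚ) : ℝ) * A i ^ 2 + ((q i.succ : ℚ) : ℝ) * Bt i ^ 2 = ((q 0 : ℚ) : ℝ) := by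
    intro i
    simp only [hA, hBt]
    exact_mod_cast hab i
  have hA2 : ∀ i, A i ^ 2 * ((m:ℝ)+1) ≤ 1 := by
    intro i
    simp only [hA]
    exact_mod_cast habA2 i
  have hA1 : ∀ i, A i ^ 2 < 1 := by
    intro i
    simp only [hA]
    exact_mod_cast habA1 i
  have h1A : ∀ i, 0 < 1 - A i ^ 2 := fun i => by linarith [hA1 i]
  -- weights
  set w0 : ℝ := 1/((m:ℝ)+1) - ∑ i : Fin m, A i ^ 2 / (((m:ℝ)+1) * (1 - A i ^ 2)) with hw0def
  set wi : Fin m → ℝ := fun i => 1 / (((m:ℝ)+1) * (1 - A i ^ 2)) with hwi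
  have hwipos : ∀ i, 0 < wi i := by
    intro i
    rw [hwi]
    have := h1A i
    positivity
  have hw0 : 0 ≤ w0 := by
    rw [hw0def]
    have hterm : ∀ i ∈ (Finset.univ : Finset (Fin m)),
        A i ^ 2 / (((m:ℝ)+1) * (1 - A i ^ 2)) ≤ 1 / (((m:ℝ)+1) * m) := by
      intro i _
      have hm : (1:ℝ) ≤ (m:ℝ) := by exact_mod_cast i.pos
      have hm0 : (0:ℝ) ≤ (m:ℝ) := by linarith
      rw [div_le_div_iff₀ (by have := h1A i; positivity) (by positivity)]
      nlinarith [hA2 i, sq_nonneg (A i), h1A i]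
    have hsum := Finset.sum_le_sum hterm
    have h2 : ∑ _i : Fin m, (1:ℝ) / (((m:ℝ)+1) * m) ≤ 1/((m:ℝ)+1) := by
      rw [Finset.sum_const, Finset.card_univ, Fintype.card_fin, nsmul_eq_mul]
      rcases Nat.eq_zero_or_pos m with hm | hm
      · subst hm; simp
      · have hmR : (0:ℝ) < m := by exact_mod_cast hm
        have : (m:ℝ) * (1 / (((m:ℝ)+1) * m)) = 1/((m:ℝ)+1) := by field_simp
        rw [this]
    linarith [le_trans hsum h2]
  have hwiA : ∀ i, wi i * A i ^ 2 = A i ^ 2 / (((m:ℝ)+1) * (1 - A i ^ 2)) := by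
    intro i; rw [hwi]; ring
  have hwiB : ∀ i, wi i * Bt i ^ 2 = ((q 0 : ℚ) : ℝ) / (((m:ℝ)+1) * ((q i.succ : ℚ) : ℝ)) := by
    intro i
    have hqs : (0:ℝ) < ((q i.succ : ℚ) : ℝ) := by exact_mod_cast hqpos i.succ
    have hB2 : Bt i ^ 2 = ((q 0 : ℚ) : ℝ) * (1 - A i ^ 2) / ((q i.succ : ℚ) : ℝ) := by
      rw [eq_div_iff hqs.ne']
      linear_combination habR i
    rw [hwi, hB2]
    have := h1A i
    field_simp
  have hWsum : w0 + ∑ i : Fin m, wi i = 1 := by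
    have hterm : ∀ i ∈ (Finset.univ : Finset (Fin m)),
        wi i - A i ^ 2 / (((m:ℝ)+1) * (1 - A i ^ 2)) = 1/((m:ℝ)+1) := by
      intro i _
      rw [hwi, div_sub_div_same]
      rw [div_eq_div_iff (by have := h1A i; positivity) (by positivity)]
      ring
    have h2 : ∑ i : Fin m, (wi i - A i ^ 2 / (((m:ℝ)+1) * (1 - A i ^ 2))) = (m:ℝ) * (1/((m:ℝ)+1)) := by
      rw [Finset.sum_congr rfl hterm, Finset.sum_const, Finset.card_univ, Fintype.card_fin,
        nsmul_eq_mul]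
    have h3 := Finset.sum_sub_distrib (s := (Finset.univ : Finset (Fin m))) (f := wi)
      (g := fun i => A i ^ 2 / (((m:ℝ)+1) * (1 - A i ^ 2)))
    have h4 : (1:ℝ)/((m:ℝ)+1) + (m:ℝ) * (1/((m:ℝ)+1)) = 1 := by field_simp; ring
    rw [hw0def]
    rw [h3] at h2
    linarith [h2, h4]
  -- the family of vectors and weights, indexed by a sum type
  set YQ : (Unit ⊕ Fin m × Bool) → (Fin (m+1) → ℚ) :=
    Sum.elim (fun _ => v 0)
      (fun p => a p.1 • v 0 + (cond p.2 (β p.1) (-β p.1)) • v p.1.succ) with hYQ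
  set W : (Unit ⊕ Fin m × Bool) → ℝ :=
    Sum.elim (fun _ => w0) (fun p => wi p.1 / 2) with hW
  set U : (Unit ⊕ Fin m × Bool) → (Fin (m+1) → ℝ) := fun t k => ((YQ t k : ℚ) : ℝ) with hU
  have hWnn : ∀ t, 0 ≤ W t := by
    rintro (u | ⟨i, s⟩)
    · simpa [hW] using hw0
    · have := hwipos i
      simp only [hW, Sum.elim_inr]
      linarith
  have hUinl : ∀ u : Unit, U (Sum.inl u) = V 0 := by
    intro u
    funext k
    simp [hU, hYQ, hV]
  have hUinr : ∀ p : Fin m × Bool,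
      U (Sum.inr p) = A p.1 • V 0 + (cond p.2 (Bt p.1) (-Bt p.1)) • V p.1.succ := by
    rintro ⟨i, s⟩
    funext k
    cases s <;>
      simp only [hU, hYQ, hV, hA, hBt, Sum.elim_inr, cond_true, cond_false, Pi.add_apply,
        Pi.smul_apply, smul_eq_mul] <;>
      push_cast <;> ring
  have hWsum' : ∑ t, W t = 1 := by
    rw [Fintype.sum_sum_type]
    simp only [hW, Sum.elim_inl, Sum.elim_inr]
    rw [Fintype.sum_prod_type]
    have hinner : ∀ i ∈ (Finset.univ : Finset (Fin m)), ∑ _s : Bool, wi i / 2 = wi i := by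
      intro i _
      rw [Fintype.sum_bool]
      ring
    rw [Finset.sum_congr rfl hinner]
    simpa using hWsum
  have hbilin : ∀ (x y : Fin (m+1) → ℝ) (cc dd : ℝ),
      (cc • x + dd • y) ⬝ᵥ Q *ᵥ (cc • x + dd • y)
        = cc^2 * (x ⬝ᵥ Q *ᵥ x) + cc*dd*(x ⬝ᵥ Q *ᵥ y) + cc*dd*(y ⬝ᵥ Q *ᵥ x)
          + dd^2 * (y ⬝ᵥ Q *ᵥ y) := by
    intro x y cc dd
    simp only [Matrix.mulVec_add, Matrix.mulVec_smul, dotProduct_add, dotProduct_smul,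
      add_dotProduct, smul_dotProduct, smul_eq_mul]
    ring
  have hnorm : ∀ t, U t ⬝ᵥ Q *ᵥ U t = ((q 0 : ℚ) : ℝ) := by
    rintro (u | ⟨i, s⟩)
    · rw [hUinl u]
      exact hqR 0
    · rw [hUinr (i, s)]
      rw [hbilin]
      rw [hqR 0, hqR i.succ, horthR 0 i.succ (Fin.succ_ne_zero i).symm,
        horthR i.succ 0 (Fin.succ_ne_zero i)]
      cases s <;> simp only [cond_true, cond_false] <;> linear_combination habR i
  have hcoef0 : w0 + ∑ i : Fin m, wi i * A i ^ 2 = 1/((m:ℝ)+1) := by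
    rw [Finset.sum_congr rfl (fun i _ => hwiA i), hw0def]
    ring
  have hinner2 : ∀ i ∈ (Finset.univ : Finset (Fin m)),
      (∑ s : Bool, W (Sum.inr (i, s)) • vecMulVec (U (Sum.inr (i, s))) (U (Sum.inr (i, s))))
        = (wi i * A i ^ 2) • vecMulVec (V 0) (V 0)
          + (wi i * Bt i ^ 2) • vecMulVec (V i.succ) (V i.succ) := by
    intro i _
    rw [Fintype.sum_bool, hUinr (i, true), hUinr (i, false)]
    simp only [hW, Sum.elim_inr, cond_true, cond_false]
    ext j k
    simp only [Matrix.add_apply, Matrix.smul_apply, vecMulVec_apply, Pi.add_apply,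
      Pi.smul_apply, smul_eq_mul]
    ring
  have hcore : ∑ t, W t • vecMulVec (U t) (U t) = (((q 0 : ℚ) : ℝ)/((m:ℝ)+1)) • P := by
    have hq0R : ((q 0 : ℚ) : ℝ) ≠ 0 := by exact_mod_cast (hqpos 0).ne'
    rw [hP, Finset.smul_sum]
    conv_rhs => rw [Fin.sum_univ_succ]
    rw [Fintype.sum_sum_type, Fintype.sum_prod_type]
    rw [Finset.sum_congr rfl hinner2, Finset.sum_add_distrib, ← Finset.sum_smul]
    have hL1 : ∑ u : Unit, W (Sum.inl u) • vecMulVec (U (Sum.inl u)) (U (Sum.inl u))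
        = w0 • vecMulVec (V 0) (V 0) := by
      have : ∀ u : Unit, W (Sum.inl u) • vecMulVec (U (Sum.inl u)) (U (Sum.inl u))
          = w0 • vecMulVec (V 0) (V 0) := by
        intro u
        rw [hUinl u]
        simp [hW]
      simp [this]
    rw [hL1, ← add_assoc, ← add_smul, hcoef0]
    congr 1
    · rw [smul_smul]
      congr 1
      field_simp
    · refine Finset.sum_congr rfl fun i _ => ?_
      rw [smul_smul, hwiB i]
      congr 1
      have hqs : ((q i.succ : ℚ) : ℝ) ≠ 0 := by exact_mod_cast (hqpos i.succ).ne'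
      field_simp
  -- common denominator
  set D : ℕ := ∏ t : Unit ⊕ Fin m × Bool, ∏ k, (YQ t k).den with hD
  have hDpos : 0 < D := by
    rw [hD]
    refine Finset.prod_pos fun t _ => Finset.prod_pos fun k _ => (YQ t k).den_pos
  have hDdvd : ∀ t k, (YQ t k).den ∣ D := by
    intro t k
    rw [hD]
    exact dvd_trans (Finset.dvd_prod_of_mem (fun k' => (YQ t k').den) (Finset.mem_univ k))
      (Finset.dvd_prod_of_mem (fun t' => ∏ k', (YQ t' k').den) (Finset.mem_univ t))
  -- the infinite family
  refine Set.infinite_of_injective_forall_mem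
    (f := fun k : ℕ => ((q 0) * (((k+1) * D : ℕ) : ℚ)^2)⁻¹) ?_ ?_
  · -- injectivity
    intro k1 k2 h
    simp only at h
    have hne : ∀ k : ℕ, (0:ℚ) < (q 0) * (((k+1) * D : ℕ) : ℚ)^2 := by
      intro k
      have h1 : (0:ℚ) < (((k+1) * D : ℕ) : ℚ) := by
        have : 0 < (k+1) * D := Nat.mul_pos (Nat.succ_pos k) hDpos
        exact_mod_cast this
      have := hqpos 0
      positivity
    have h1 : (q 0) * (((k1+1) * D : ℕ) : ℚ)^2 = (q 0) * (((k2+1) * D : ℕ) : ℚ)^2 :=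
      inv_injective h
    have h2 : ((((k1+1) * D : ℕ) : ℚ))^2 = ((((k2+1) * D : ℕ) : ℚ))^2 :=
      mul_left_cancel₀ (hqpos 0).ne' h1
    have h4 : ((k1+1) * D)^2 = ((k2+1) * D)^2 := by exact_mod_cast h2
    have h6 : (k1+1) * D = (k2+1) * D := Nat.pow_left_injective (by norm_num) h4
    have h7 : k1 + 1 = k2 + 1 := Nat.eq_of_mul_eq_mul_right hDpos h6
    omega
  · -- membership
    intro k
    simp only [Set.mem_setOf_eq]
    set κ : ℕ := (k+1) * D with hκ
    have hκpos : 0 < κ := Nat.mul_pos (Nat.succ_pos k) hDpos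
    have hκQ : (0:ℚ) < (κ:ℚ) := by exact_mod_cast hκpos
    have hκR : (0:ℝ) < (κ:ℝ) := by exact_mod_cast hκpos
    have hq0Q : (0:ℚ) < q 0 := hqpos 0
    have hq0R : (0:ℝ) < ((q 0 : ℚ) : ℝ) := by exact_mod_cast hq0Q
    constructor
    · positivity
    refine ⟨2*m+1, ?_, ?_⟩
    · rw [Nat.le_div_iff_mul_le (by norm_num)]
      rcases Nat.eq_zero_or_pos m with hm | hm
      · subst hm; norm_num
      · nlinarith [Nat.one_le_iff_ne_zero.mpr hm.ne']
    have hcard : Fintype.card (Fin (2*m+1)) = Fintype.card (Unit ⊕ Fin m × Bool) := by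
      simp only [Fintype.card_fin, Fintype.card_sum, Fintype.card_unit, Fintype.card_prod,
        Fintype.card_bool]
      omega
    set e : Fin (2*m+1) ≃ (Unit ⊕ Fin m × Bool) := Fintype.equivOfCardEq hcard with he
    have hint : ∀ t k', ∃ z : ℤ, ((κ:ℚ) * YQ t k') = (z:ℚ) := by
      intro t k'
      exact den_dvd_int _ _ ((hDdvd t k').mul_left (k+1))
    choose Z hZ using hint
    have hvecs : ∀ j : Fin (2*m+1),
        (fun i => ((Z (e j) i : ℤ) : ℝ)) = (κ:ℝ) • U (e j) := by
      intro j
      funext i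
      have h1 := hZ (e j) i
      have h2 : ((Z (e j) i : ℤ) : ℝ) = ((κ:ℚ):ℝ) * ((YQ (e j) i : ℚ):ℝ) := by
        exact_mod_cast congrArg (fun t : ℚ => (t:ℝ)) h1.symm
      rw [h2]
      simp [hU]
    refine ⟨fun j i => Z (e j) i, fun j => W (e j), fun j => hWnn (e j), ?_, ?_, ?_⟩
    · rw [Equiv.sum_comp e W]
      exact hWsum'
    · intro j
      have hv1 := hvecs j
      simp only at hv1 ⊢
      rw [hv1]
      rw [Matrix.mulVec_smul, Matrix.smul_mulVec, dotProduct_smul, dotProduct_smul,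
        smul_dotProduct, hnorm (e j)]
      simp only [smul_eq_mul]
      push_cast
      field_simp
    · have hcR : ((((q 0) * (κ:ℚ)^2)⁻¹ : ℚ) : ℝ) = (((q 0 : ℚ):ℝ) * (κ:ℝ)^2)⁻¹ := by
        push_cast
        ring
      have hcR0 : ((((q 0) * (κ:ℚ)^2)⁻¹ : ℚ) : ℝ) ≠ 0 := by
        rw [hcR]
        positivity
      have hQP : Q * P = 1 := mul_eq_one_comm.mp hPQ
      have hinv : (((((q 0) * (κ:ℚ)^2)⁻¹ : ℚ) : ℝ) • Q)⁻¹
          = ((((q 0) * (κ:ℚ)^2)⁻¹ : ℚ) : ℝ)⁻¹ • P := by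
        apply Matrix.inv_eq_right_inv
        rw [Matrix.smul_mul, Matrix.mul_smul, smul_smul,
          mul_inv_cancel₀ hcR0, one_smul, hQP]
      have hL : ∀ j : Fin (2*m+1),
          W (e j) • vecMulVec (fun i => ((Z (e j) i : ℤ):ℝ)) (fun i => ((Z (e j) i:ℤ):ℝ))
            = ((κ:ℝ)^2) • (W (e j) • vecMulVec (U (e j)) (U (e j))) := by
        intro j
        rw [hvecs j, vmv_smul_sq]
        rw [smul_comm]
      calc ∑ j : Fin (2*m+1),
          W (e j) • vecMulVec (fun i => ((Z (e j) i : ℤ):ℝ)) (fun i => ((Z (e j) i:ℤ):ℝ))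
          = ∑ j : Fin (2*m+1), ((κ:ℝ)^2) • (W (e j) • vecMulVec (U (e j)) (U (e j))) :=
            Finset.sum_congr rfl fun j _ => hL j
        _ = ((κ:ℝ)^2) • ∑ j : Fin (2*m+1), (W (e j) • vecMulVec (U (e j)) (U (e j))) :=
            (Finset.smul_sum).symm
        _ = ((κ:ℝ)^2) • ∑ t, (W t • vecMulVec (U t) (U t)) := by
            rw [Equiv.sum_comp e (fun t => W t • vecMulVec (U t) (U t))]
        _ = ((κ:ℝ)^2) • ((((q 0 : ℚ) : ℝ)/((m:ℝ)+1)) • P) := by rw [hcore]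
        _ = (((m+1:ℕ) : ℝ))⁻¹ • (((((q 0) * (κ:ℚ)^2)⁻¹ : ℚ) : ℝ) • Q)⁻¹ := by
            rw [hinv, smul_smul, smul_smul, hcR, inv_inv]
            congr 1
            push_cast
            field_simp
end

section
/- Let Q be an n×n symmetric positive definite matrix with rational entries, and let E = {u ∈ ℝⁿ : uᵗQu = 1} be the associated hyper-ellipsoid. Then there exists a nonzero real number λ such that the set of points u ∈ E with (1/λ)u ∈ ℚⁿ is dense in E. -/
open Matrix BigOperators

/-- **Density of (dilated) rational points on a rational hyper-ellipsoid.**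
If `Q` is a symmetric positive definite matrix with rational entries and
`E = {u : uᵗQu = 1}`, then there is a nonzero real `λ` such that the points `u ∈ E`
with `(1/λ) u` rational are dense in `E`. -/
theorem dense_rational_points_on_ellipsoid
    (n : ℕ) (Q : Matrix (Fin n) (Fin n) ℝ)
    (hQ : Q.PosDef) (hQrat : ∀ i j, ∃ q : ℚ, Q i j = (q : ℝ)) :
    ∃ l : ℝ, l ≠ 0 ∧
      ∀ u : Fin n → ℝ, u ⬝ᵥ (Q *ᵥ u) = 1 →
        u ∈ closure {v : Fin n → ℝ |
          v ⬝ᵥ (Q *ᵥ v) = 1 ∧ ∀ i, ∃ q : ℚ, v i = l * (q : ℝ)} := by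
  rcases Nat.eq_zero_or_pos n with hn | hn
  · subst hn
    exact ⟨1, one_ne_zero, fun u hu => absurd hu (by simp [dotProduct])⟩
  choose Qq hQq using hQrat
  -- symmetry of the bilinear form
  have hT : Qᵀ = Q := by
    ext i j
    simpa using congrFun (congrFun hQ.1 i) j
  have hsymm : ∀ x y : Fin n → ℝ, x ⬝ᵥ (Q *ᵥ y) = y ⬝ᵥ (Q *ᵥ x) := by
    intro x y
    rw [dotProduct_mulVec, dotProduct_comm]
    congr 1
    rw [← mulVec_transpose, hT]
  have hcont : Continuous fun d : Fin n → ℝ => d ⬝ᵥ (Q *ᵥ d) := by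
    simp only [dotProduct, mulVec]
    fun_prop
  have hcast : ∀ x y : Fin n → ℚ,
      (fun i => ((x i : ℝ))) ⬝ᵥ (Q *ᵥ fun i => ((y i : ℝ))) = ((x ⬝ᵥ (Qq *ᵥ y) : ℚ) : ℝ) := by
    intro x y
    simp only [dotProduct, mulVec, hQq]
    push_cast
    ring
  have hpos : ∀ x : Fin n → ℝ, x ≠ 0 → 0 < x ⬝ᵥ (Q *ᵥ x) := by
    intro x hx
    simpa using hQ.dotProduct_mulVec_pos hx
  set z : Fin n := ⟨0, hn⟩
  set pq : Fin n → ℚ := fun i => if i = z then 1 else 0 with hpq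
  set p : Fin n → ℝ := fun i => ((pq i : ℝ)) with hp
  have hpz : p z = 1 := by simp [hp, hpq]
  have hpne : p ≠ 0 := by
    intro h
    have := congrFun h z
    rw [hpz] at this
    simp at this
  set c : ℝ := p ⬝ᵥ (Q *ᵥ p) with hcdef
  have hc : 0 < c := hpos p hpne
  set s : ℝ := Real.sqrt c with hsdef
  have hs : 0 < s := Real.sqrt_pos.2 hc
  have hss : s * s = c := Real.mul_self_sqrt hc.le
  refine ⟨s⁻¹, inv_ne_zero hs.ne', fun u hu => ?_⟩
  rw [Metric.mem_closure_iff]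
  intro ε hε
  set w : Fin n → ℝ := s • u with hwdef
  have hw : w ⬝ᵥ (Q *ᵥ w) = c := by
    simp only [hwdef, mulVec_smul, smul_dotProduct, dotProduct_smul, smul_eq_mul, hu]
    rw [mul_one, hss]
  by_cases hwp : w = p
  · refine ⟨u, ⟨hu, fun i => ⟨pq i, ?_⟩⟩, by simpa using hε⟩
    have := congrFun hwp i
    simp only [hwdef, Pi.smul_apply, smul_eq_mul] at this
    field_simp [hp]
    rw [mul_comm]
    exact this
  · set d₀ : Fin n → ℝ := w - p with hd₀def
    have hd₀ : d₀ ≠ 0 := sub_ne_zero.2 hwp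
    have hBd₀ : 0 < d₀ ⬝ᵥ (Q *ᵥ d₀) := hpos _ hd₀
    have key : 2 * (p ⬝ᵥ (Q *ᵥ d₀)) = -(d₀ ⬝ᵥ (Q *ᵥ d₀)) := by
      have hw' : (d₀ + p) ⬝ᵥ (Q *ᵥ (d₀ + p)) = c := by
        rw [show d₀ + p = w by rw [hd₀def]; abel]
        exact hw
      have hsy := hsymm d₀ p
      simp only [add_dotProduct, dotProduct_add, mulVec_add, hcdef] at hw' ⊢
      linarith
    set G : (Fin n → ℝ) → (Fin n → ℝ) :=
      fun d => s⁻¹ • (p - (2 * (p ⬝ᵥ (Q *ᵥ d)) / (d ⬝ᵥ (Q *ᵥ d))) • d) with hGdef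
    have hGd₀ : G d₀ = u := by
      rw [hGdef]
      simp only
      rw [key, neg_div, div_self hBd₀.ne']
      rw [show p - (-1 : ℝ) • d₀ = p + d₀ by rw [neg_one_smul]; abel]
      rw [show p + d₀ = w by rw [hd₀def]; abel]
      rw [hwdef, smul_smul, inv_mul_cancel₀ hs.ne', one_smul]
    have hc2 : Continuous fun d : Fin n → ℝ => 2 * (p ⬝ᵥ (Q *ᵥ d)) := by
      simp only [dotProduct, mulVec]
      fun_prop
    have hGcont : ContinuousAt G d₀ := by
      refine ContinuousAt.fun_const_smul (ContinuousAt.fun_sub continuousAt_const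
        (ContinuousAt.fun_smul (ContinuousAt.div hc2.continuousAt hcont.continuousAt hBd₀.ne')
          continuousAt_id)) _
    have hnb : {d : Fin n → ℝ | d ⬝ᵥ (Q *ᵥ d) ≠ 0} ∩ G ⁻¹' (Metric.ball u ε) ∈ nhds d₀ := by
      refine Filter.inter_mem ?_ ?_
      · exact (isOpen_compl_singleton.preimage hcont).mem_nhds hBd₀.ne'
      · exact hGcont.preimage_mem_nhds (by rw [hGd₀]; exact Metric.ball_mem_nhds _ hε)
    obtain ⟨δ, hδpos, hball⟩ := Metric.mem_nhds_iff.1 hnb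
    choose dq hdq using fun i => exists_rat_near (d₀ i) hδpos
    set d : Fin n → ℝ := fun i => ((dq i : ℝ)) with hddef
    have hdmem : d ∈ Metric.ball d₀ δ := by
      rw [Metric.mem_ball, dist_comm, dist_pi_lt_iff hδpos]
      intro i
      rw [Real.dist_eq]
      exact hdq i
    obtain ⟨hBd, hGd⟩ := hball hdmem
    have hBd' : d ⬝ᵥ (Q *ᵥ d) ≠ 0 := hBd
    -- the second intersection point is on the quadric
    have hquad : (p - (2 * (p ⬝ᵥ (Q *ᵥ d)) / (d ⬝ᵥ (Q *ᵥ d))) • d) ⬝ᵥ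
        (Q *ᵥ (p - (2 * (p ⬝ᵥ (Q *ᵥ d)) / (d ⬝ᵥ (Q *ᵥ d))) • d)) = c := by
      have hsy := hsymm d p
      simp only [sub_dotProduct, dotProduct_sub, mulVec_sub, mulVec_smul,
        smul_dotProduct, dotProduct_smul, smul_eq_mul, ← hcdef, hsy]
      field_simp
      ring
    refine ⟨G d, ⟨?_, ?_⟩, ?_⟩
    · rw [hGdef]
      simp only [mulVec_smul, smul_dotProduct, dotProduct_smul, smul_eq_mul, hquad]
      rw [← hss]
      field_simp
    · intro i
      set tq : ℚ := 2 * (pq ⬝ᵥ (Qq *ᵥ dq)) / (dq ⬝ᵥ (Qq *ᵥ dq)) with htq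
      refine ⟨pq i - tq * dq i, ?_⟩
      have h1 : p ⬝ᵥ (Q *ᵥ d) = ((pq ⬝ᵥ (Qq *ᵥ dq) : ℚ) : ℝ) := hcast pq dq
      have h2 : d ⬝ᵥ (Q *ᵥ d) = ((dq ⬝ᵥ (Qq *ᵥ dq) : ℚ) : ℝ) := hcast dq dq
      rw [hGdef]
      simp only [Pi.smul_apply, Pi.sub_apply, Pi.smul_apply, smul_eq_mul, h1, h2]
      rw [hp, hddef, htq]
      push_cast
      ring
    · rw [dist_comm]
      exact hGd
end

section
/- Let Q be an n×n real symmetric positive definite matrix. Then there exist N = n(n+1)/2 points u₁,…,u_N ∈ ℝⁿ with uᵢᵗQuᵢ = 1 for every i, such that the rank-one matrices u₁u₁ᵗ,…,u_Nu_Nᵗ span the whole space of n×n real symmetric matrices. -/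
open Matrix BigOperators

/-- The set of outer products of points on the ellipsoid `uᵗQu = 1`. -/
def ellS {n : ℕ} (Q : Matrix (Fin n) (Fin n) ℝ) : Set (Matrix (Fin n) (Fin n) ℝ) :=
  {A | ∃ u : Fin n → ℝ, u ⬝ᵥ (Q *ᵥ u) = 1 ∧ A = vecMulVec u u}

lemma exists_unit_point {n : ℕ} {Q : Matrix (Fin n) (Fin n) ℝ} (hQ : Q.PosDef)
    (v : Fin n → ℝ) (hv : v ≠ 0) :
    ∃ u : Fin n → ℝ, u ⬝ᵥ (Q *ᵥ u) = 1 ∧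
      vecMulVec v v = (v ⬝ᵥ (Q *ᵥ v)) • vecMulVec u u := by
  have hc : 0 < v ⬝ᵥ (Q *ᵥ v) := by simpa using hQ.dotProduct_mulVec_pos hv
  set c := v ⬝ᵥ (Q *ᵥ v) with hcdef
  refine ⟨(Real.sqrt c)⁻¹ • v, ?_, ?_⟩
  · have : ((Real.sqrt c)⁻¹ • v) ⬝ᵥ (Q *ᵥ ((Real.sqrt c)⁻¹ • v))
        = (Real.sqrt c)⁻¹ * ((Real.sqrt c)⁻¹ * c) := by
      rw [Matrix.mulVec_smul, dotProduct_smul, smul_dotProduct]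
      simp [smul_eq_mul, hcdef]
    rw [this, ← mul_assoc, ← mul_inv, Real.mul_self_sqrt hc.le]
    field_simp
  · ext i j
    simp only [vecMulVec_apply, Matrix.smul_apply, Pi.smul_apply, smul_eq_mul]
    have : c * ((Real.sqrt c)⁻¹ * v i * ((Real.sqrt c)⁻¹ * v j))
        = (c * ((Real.sqrt c)⁻¹ * (Real.sqrt c)⁻¹)) * (v i * v j) := by ring
    rw [this, ← mul_inv, Real.mul_self_sqrt hc.le, mul_inv_cancel₀ hc.ne', one_mul]

lemma vecMulVec_mem_span {n : ℕ} {Q : Matrix (Fin n) (Fin n) ℝ} (hQ : Q.PosDef)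
    (v : Fin n → ℝ) : vecMulVec v v ∈ Submodule.span ℝ (ellS Q) := by
  by_cases hv : v = 0
  · have : vecMulVec v v = 0 := by ext i j; simp [vecMulVec_apply, hv]
    rw [this]; exact Submodule.zero_mem _
  · obtain ⟨u, hu1, hu2⟩ := exists_unit_point hQ v hv
    rw [hu2]
    exact Submodule.smul_mem _ _ (Submodule.subset_span ⟨u, hu1, rfl⟩)

lemma symm_mem_span {n : ℕ} {Q : Matrix (Fin n) (Fin n) ℝ} (hQ : Q.PosDef)
    (M : Matrix (Fin n) (Fin n) ℝ) (hM : M.IsSymm) :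
    M ∈ Submodule.span ℝ (ellS Q) := by
  have key : ∀ i j : Fin n,
      vecMulVec (Pi.single i 1 + Pi.single j 1 : Fin n → ℝ) (Pi.single i 1 + Pi.single j 1)
        - vecMulVec (Pi.single i 1) (Pi.single i 1)
        - vecMulVec (Pi.single j 1) (Pi.single j 1)
      ∈ Submodule.span ℝ (ellS Q) := fun i j =>
    Submodule.sub_mem _ (Submodule.sub_mem _ (vecMulVec_mem_span hQ _)
      (vecMulVec_mem_span hQ _)) (vecMulVec_mem_span hQ _)
  have hrep : M = ∑ i : Fin n, ∑ j : Fin n, (M i j / 2) •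
      (vecMulVec (Pi.single i 1 + Pi.single j 1 : Fin n → ℝ) (Pi.single i 1 + Pi.single j 1)
        - vecMulVec (Pi.single i 1) (Pi.single i 1)
        - vecMulVec (Pi.single j 1) (Pi.single j 1)) := by
    ext a b
    simp only [Matrix.sum_apply, Matrix.smul_apply, Matrix.sub_apply, vecMulVec_apply,
      Pi.add_apply, Pi.single_apply, smul_eq_mul]
    have : ∀ i j : Fin n,
        M i j / 2 * (((if a = i then (1:ℝ) else 0) + if a = j then 1 else 0) *
          ((if b = i then (1:ℝ) else 0) + if b = j then 1 else 0)
          - (if a = i then (1:ℝ) else 0) * (if b = i then 1 else 0)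
          - (if a = j then (1:ℝ) else 0) * (if b = j then 1 else 0))
        = M i j / 2 * ((if a = i then (1:ℝ) else 0) * (if b = j then 1 else 0))
          + M i j / 2 * ((if a = j then (1:ℝ) else 0) * (if b = i then 1 else 0)) := by
      intro i j; ring
    rw [Finset.sum_congr rfl fun i _ => Finset.sum_congr rfl fun j _ => this i j]
    simp only [Finset.sum_add_distrib]
    have h1 : ∑ i : Fin n, ∑ j : Fin n, M i j / 2 *
        ((if a = i then (1:ℝ) else 0) * (if b = j then 1 else 0)) = M a b / 2 := by
      simp [Finset.sum_ite_eq, mul_ite, ite_mul, eq_comm]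
    have h2 : ∑ i : Fin n, ∑ j : Fin n, M i j / 2 *
        ((if a = j then (1:ℝ) else 0) * (if b = i then 1 else 0)) = M b a / 2 := by
      simp [Finset.sum_ite_eq, mul_ite, ite_mul, eq_comm]
    rw [h1, h2, hM.apply a b]
    ring
  rw [hrep]
  exact Submodule.sum_mem _ fun i _ => Submodule.sum_mem _ fun j _ =>
    Submodule.smul_mem _ _ (key i j)

/-- The submodule of symmetric matrices. -/
def symmSub (n : ℕ) : Submodule ℝ (Matrix (Fin n) (Fin n) ℝ) where
  carrier := {M | M.IsSymm}
  add_mem' := fun h1 h2 => h1.add h2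
  zero_mem' := Matrix.isSymm_zero
  smul_mem' := fun c _ h => h.smul c

noncomputable def toSym2 (n : ℕ) : symmSub n →ₗ[ℝ] (Sym2 (Fin n) → ℝ) where
  toFun M := Sym2.lift ⟨fun i j => M.1 i j, fun i j => (M.2.apply i j).symm⟩
  map_add' := fun M N => by
    ext s
    induction s using Sym2.ind with
    | _ i j => simp [Sym2.lift_mk]
  map_smul' := fun c M => by
    ext s
    induction s using Sym2.ind with
    | _ i j => simp [Sym2.lift_mk]

lemma toSym2_injective (n : ℕ) : Function.Injective (toSym2 n) := by
  rw [injective_iff_map_eq_zero]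
  intro M hM
  ext i j
  have h := congrFun hM (s(i, j))
  simpa [toSym2, Sym2.lift_mk] using h

lemma finrank_symmSub_le (n : ℕ) :
    Module.finrank ℝ (symmSub n) ≤ n * (n + 1) / 2 := by
  have h := LinearMap.finrank_le_finrank_of_injective (toSym2_injective n)
  rw [Module.finrank_pi] at h
  rwa [Sym2.card, Fintype.card_fin, Nat.choose_two_right, Nat.add_sub_cancel,
    Nat.mul_comm] at h

lemma ellS_subset_symm {n : ℕ} (Q : Matrix (Fin n) (Fin n) ℝ) :
    ellS Q ⊆ (symmSub n : Set (Matrix (Fin n) (Fin n) ℝ)) := by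
  rintro A ⟨u, -, rfl⟩
  show (vecMulVec u u).IsSymm
  ext i j
  simp [vecMulVec_apply, Matrix.transpose_apply, mul_comm]

/-- **Spanning points on a hyper-ellipsoid.** For any symmetric positive definite `Q`
there are `N = n(n+1)/2` points `uᵢ` with `uᵢᵗ Q uᵢ = 1` whose outer products
`uᵢ uᵢᵗ` span the space of all `n × n` real symmetric matrices. -/
theorem ellipsoid_points_spanning_symmetric_matrices
    (n : ℕ) (Q : Matrix (Fin n) (Fin n) ℝ) (hQ : Q.PosDef) :
    ∃ u : Fin (n * (n + 1) / 2) → Fin n → ℝ,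
      (∀ i, u i ⬝ᵥ (Q *ᵥ u i) = 1) ∧
      ∀ M : Matrix (Fin n) (Fin n) ℝ, M.IsSymm →
        M ∈ Submodule.span ℝ (Set.range fun i => vecMulVec (u i) (u i)) := by
  classical
  rcases Nat.eq_zero_or_pos n with hn | hn
  · subst hn
    refine ⟨fun i => i.elim0, fun i => i.elim0, fun M hM => ?_⟩
    have : M = 0 := Subsingleton.elim M 0
    rw [this]; exact Submodule.zero_mem _
  -- a default point on the ellipsoid
  obtain ⟨u₀, hu₀, -⟩ := exists_unit_point hQ (Pi.single ⟨0, hn⟩ 1) (by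
    intro h
    have := congrFun h ⟨0, hn⟩
    simp [Pi.single_apply] at this)
  -- a linearly independent spanning subset
  obtain ⟨t, hts, htspan, htli⟩ := exists_linearIndependent ℝ (ellS Q)
  have htfin : t.Finite := htli.setFinite
  haveI : Fintype t := htfin.fintype
  have hcard : t.toFinset.card ≤ n * (n + 1) / 2 := by
    have h1 : t.toFinset.card = Module.finrank ℝ (Submodule.span ℝ t) := by
      rw [Set.toFinset_card, finrank_span_set_eq_card htli]
      exact (Set.toFinset_card t).symm ▸ rfl
    have h2 : Submodule.span ℝ t ≤ symmSub n := by
      rw [htspan]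
      exact Submodule.span_le.mpr (ellS_subset_symm Q)
    calc t.toFinset.card = Module.finrank ℝ (Submodule.span ℝ t) := h1
      _ ≤ Module.finrank ℝ (symmSub n) := Submodule.finrank_mono h2
      _ ≤ n * (n + 1) / 2 := finrank_symmSub_le n
  have hcard' : Fintype.card t ≤ Fintype.card (Fin (n * (n + 1) / 2)) := by
    rwa [Fintype.card_fin, ← Set.toFinset_card]
  obtain ⟨g⟩ : Nonempty (t ↪ Fin (n * (n + 1) / 2)) :=
    Function.Embedding.nonempty_of_card_le hcard'
  -- choose witnesses
  have hw : ∀ x : t, ∃ w : Fin n → ℝ, w ⬝ᵥ (Q *ᵥ w) = 1 ∧ (x : Matrix _ _ ℝ) = vecMulVec w w :=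
    fun x => hts x.2
  choose w hw1 hw2 using hw
  set u : Fin (n * (n + 1) / 2) → Fin n → ℝ :=
    fun i => if h : ∃ x : t, g x = i then w h.choose else u₀ with hu
  refine ⟨u, ?_, ?_⟩
  · intro i
    rw [hu]
    by_cases h : ∃ x : t, g x = i
    · simp only [dif_pos h]; exact hw1 _
    · simp only [dif_neg h]; exact hu₀
  · intro M hM
    have hsub : t ⊆ Set.range fun i => vecMulVec (u i) (u i) := by
      intro x hx
      refine ⟨g ⟨x, hx⟩, ?_⟩
      have h : ∃ x' : t, g x' = g ⟨x, hx⟩ := ⟨⟨x, hx⟩, rfl⟩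
      have hch : h.choose = ⟨x, hx⟩ := g.injective h.choose_spec
      simp only [hu, dif_pos h, hch]
      exact (hw2 ⟨x, hx⟩).symm
    have : M ∈ Submodule.span ℝ t := by
      rw [htspan]; exact symm_mem_span hQ M hM
    exact Submodule.span_mono hsub this
end

section
/- Let Q be an n×n real symmetric positive definite matrix. Then (1/n)Q⁻¹ is the unique maximizer of the determinant on the set {P : P is an n×n symmetric positive definite matrix with tr(PQ) = 1}; that is, every symmetric positive definite P with tr(PQ) = 1 satisfies det P ≤ det(Q)⁻¹/nⁿ, with equality if and only if P = (1/n)Q⁻¹. -/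
open Matrix BigOperators

/-- AM-GM with equality case, in the form needed below. -/
lemma amgm_aux (n : ℕ) (hn : 0 < n) (μ : Fin n → ℝ) (hpos : ∀ i, 0 < μ i)
    (hsum : ∑ i, μ i = 1) :
    ∏ i, μ i ≤ ((n : ℝ) ^ n)⁻¹ ∧
      ((∏ i, μ i = ((n : ℝ) ^ n)⁻¹) ↔ ∀ i, μ i = (n : ℝ)⁻¹) := by
  have hn' : (0 : ℝ) < n := by exact_mod_cast hn
  set f : Fin n → ℝ := fun i => (n : ℝ) * μ i with hf
  have hfpos : ∀ i, 0 < f i := fun i => mul_pos hn' (hpos i)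
  have hfprod : ∏ i, f i = (n : ℝ) ^ n * ∏ i, μ i := by
    rw [hf, Finset.prod_mul_distrib, Finset.prod_const, Finset.card_univ, Fintype.card_fin]
  have hfsum : ∑ i, (f i - 1) = 0 := by
    simp [hf, ← Finset.mul_sum, hsum, Finset.sum_sub_distrib]
  have hprodpos : 0 < ∏ i, f i := Finset.prod_pos fun i _ => hfpos i
  have hlog : Real.log (∏ i, f i) = ∑ i, Real.log (f i) :=
    Real.log_prod fun i _ => (hfpos i).ne'
  have hle : Real.log (∏ i, f i) ≤ 0 := by
    rw [hlog, ← hfsum]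
    exact Finset.sum_le_sum fun i _ => Real.log_le_sub_one_of_pos (hfpos i)
  have hfle : ∏ i, f i ≤ 1 := by
    have := Real.exp_le_exp.2 hle
    rwa [Real.exp_log hprodpos, Real.exp_zero] at this
  have hnnpos : (0 : ℝ) < (n : ℝ) ^ n := pow_pos hn' n
  have hmu : ∏ i, μ i = (∏ i, f i) / (n : ℝ) ^ n := by
    rw [hfprod]; field_simp
  constructor
  · rw [hmu]
    rw [← one_div]
    gcongr
  · constructor
    · intro heq
      by_contra hc
      push_neg at hc
      obtain ⟨j, hj⟩ := hc
      have hfj : f j ≠ 1 := by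
        intro h1
        apply hj
        have := h1
        rw [hf] at this
        field_simp at this ⊢
        linarith [this]
      have hstrict : Real.log (∏ i, f i) < 0 := by
        rw [hlog, ← hfsum]
        exact Finset.sum_lt_sum (fun i _ => Real.log_le_sub_one_of_pos (hfpos i))
          ⟨j, Finset.mem_univ j, Real.log_lt_sub_one_of_pos (hfpos j) hfj⟩
      have hflt : ∏ i, f i < 1 := by
        have := Real.exp_lt_exp.2 hstrict
        rwa [Real.exp_log hprodpos, Real.exp_zero] at this
      have : ∏ i, μ i < ((n : ℝ) ^ n)⁻¹ := by
        rw [hmu, ← one_div]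
        gcongr
      exact absurd heq this.ne
    · intro h
      rw [Finset.prod_congr rfl fun i _ => h i, Finset.prod_const, Finset.card_univ,
        Fintype.card_fin, ← inv_pow]

/-- **Unique determinant maximizer on the trace hyperplane.** For a symmetric positive
definite matrix `Q`, every symmetric positive definite `P` with `tr (P * Q) = 1`
satisfies `det P ≤ (det Q)⁻¹ / n ^ n`, with equality iff `P = (1/n) • Q⁻¹`. -/
theorem det_max_on_trace_hyperplane
    (n : ℕ) (hn : 0 < n) (Q : Matrix (Fin n) (Fin n) ℝ) (hQ : Q.PosDef)
    (P : Matrix (Fin n) (Fin n) ℝ) (hP : P.PosDef)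
    (htr : (P * Q).trace = 1) :
    P.det ≤ Q.det⁻¹ / (n : ℝ) ^ n ∧
      (P.det = Q.det⁻¹ / (n : ℝ) ^ n ↔ P = (n : ℝ)⁻¹ • Q⁻¹) := by
  classical
  have hn' : (0 : ℝ) < n := by exact_mod_cast hn
  obtain ⟨S, hSps, hSS⟩ : ∃ S : Matrix (Fin n) (Fin n) ℝ, S.PosSemidef ∧ S * S = Q :=
    open scoped MatrixOrder in
    ⟨CFC.sqrt Q, (CFC.sqrt_nonneg Q).posSemidef, CFC.sqrt_mul_sqrt_self Q hQ.posSemidef.nonneg⟩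
  have hSH : Sᴴ = S := hSps.1
  have hdQ : 0 < Q.det := hQ.det_pos
  have hdS : S.det * S.det = Q.det := by rw [← det_mul, hSS]
  have hdSne : S.det ≠ 0 := by
    intro h; rw [h, mul_zero] at hdS; exact hdQ.ne' hdS.symm
  set M := S * P * S with hMdef
  have hMps : M.PosSemidef := by
    have := hP.posSemidef.conjTranspose_mul_mul_same S
    rwa [hSH] at this
  have hdetM : M.det = P.det * Q.det := by
    rw [hMdef, det_mul, det_mul, ← hdS]; ring
  have htrM : M.trace = 1 := by
    rw [hMdef, trace_mul_cycle, hSS, trace_mul_comm, htr]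
  clear_value M
  set μ := hMps.1.eigenvalues with hμdef
  have hprod : M.det = ∏ i, μ i := by
    have := hMps.1.det_eq_prod_eigenvalues
    simpa [RCLike.ofReal_real_eq_id] using this
  have hsum : ∑ i, μ i = 1 := by
    rw [← htrM]
    conv_rhs => rw [hMps.1.spectral_theorem]
    simp only [Unitary.conjStarAlgAut_apply, Unitary.coe_star]
    rw [trace_mul_cycle,
      Matrix.mem_unitaryGroup_iff'.mp (hMps.1.eigenvectorUnitary).2, one_mul, trace_diagonal]
    simp [RCLike.ofReal_real_eq_id]
    rfl
  have hdetMpos : 0 < M.det := by rw [hdetM]; exact mul_pos hP.det_pos hdQ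
  have hpos : ∀ i, 0 < μ i := by
    intro i
    refine (hMps.eigenvalues_nonneg i).lt_of_ne' fun h0 => ?_
    rw [hprod] at hdetMpos
    exact hdetMpos.ne' (Finset.prod_eq_zero (Finset.mem_univ i) h0)
  obtain ⟨hle, hiff⟩ := amgm_aux n hn μ hpos hsum
  have hMone : M.det = ((n : ℝ) ^ n)⁻¹ ↔ M = (n : ℝ)⁻¹ • 1 := by
    constructor
    · intro h
      have hall : ∀ i, μ i = (n : ℝ)⁻¹ := hiff.1 (hprod ▸ h)
      have hdiag : diagonal (RCLike.ofReal ∘ μ) = ((n : ℝ)⁻¹ • 1 : Matrix (Fin n) (Fin n) ℝ) := by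
        ext i j
        by_cases hij : i = j <;>
          simp [diagonal, hij, hall, Matrix.one_apply, RCLike.ofReal_real_eq_id]
      conv_lhs => rw [hMps.1.spectral_theorem]
      simp only [Unitary.conjStarAlgAut_apply, Unitary.coe_star]
      rw [hdiag, mul_smul_comm, smul_mul_assoc, mul_one,
        Matrix.mem_unitaryGroup_iff.mp (hMps.1.eigenvectorUnitary).2]
    · intro h
      rw [h, det_smul, det_one, mul_one, Fintype.card_fin, inv_pow]
  have hPiff : M = (n : ℝ)⁻¹ • 1 ↔ P = (n : ℝ)⁻¹ • Q⁻¹ := by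
    have hQinv : Q⁻¹ = S⁻¹ * S⁻¹ := by rw [← hSS, Matrix.mul_inv_rev]
    constructor
    · intro h
      have h2 : S⁻¹ * M * S⁻¹ = P := by
        rw [hMdef, mul_assoc S P S, ← mul_assoc S⁻¹ S (P * S),
          Matrix.nonsing_inv_mul _ (Ne.isUnit hdSne), one_mul, mul_assoc,
          Matrix.mul_nonsing_inv _ (Ne.isUnit hdSne), mul_one]
      rw [← h2, h, mul_smul_comm, mul_one, smul_mul_assoc, hQinv]
    · intro h
      rw [hMdef, h, mul_smul_comm, smul_mul_assoc, hQinv, ← mul_assoc,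
        Matrix.mul_nonsing_inv _ (Ne.isUnit hdSne), one_mul,
        Matrix.nonsing_inv_mul _ (Ne.isUnit hdSne)]
  have hPdet : P.det = M.det / Q.det := by rw [hdetM]; field_simp
  have hPM : P.det = Q.det⁻¹ / (n : ℝ) ^ n ↔ M.det = ((n : ℝ) ^ n)⁻¹ := by
    rw [hPdet, div_eq_iff hdQ.ne']
    constructor
    · intro h; rw [h]; field_simp
    · intro h; rw [h]; field_simp
  constructor
  · rw [hPdet]
    have h2 : Q.det⁻¹ / (n : ℝ) ^ n = ((n : ℝ) ^ n)⁻¹ / Q.det := by ring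
    rw [h2, hprod]
    gcongr
  · rw [hPM, hMone, hPiff]
end

section
/- Let Q be an n×n real symmetric positive definite matrix and Y₁,…,Y_N ∈ ℤⁿ such that YⱼᵗQYⱼ = 1 for all j and (1/n)Q⁻¹ lies in the convex hull C_Y of {Y₁Y₁ᵗ,…,Y_NY_Nᵗ}. Then: (i) for every n×n symmetric positive definite matrix P with YⱼᵗPYⱼ = 1 for all j, one has det P ≤ det Q (Q maximizes the determinant on W_Y); and (ii) for every matrix M ∈ C_Y, one has det M ≤ det((1/n)Q⁻¹) = det(Q)⁻¹/nⁿ ((1/n)Q⁻¹ maximizes the determinant on C_Y). -/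
open Matrix BigOperators

section aux

variable {n : ℕ}

private lemma amgm_aux_s8 (hn : 0 < n) (z : Fin n → ℝ) (hz : ∀ i, 0 ≤ z i) :
    ∏ i, z i ≤ ((∑ i, z i) / n) ^ n := by
  have hn' : (0:ℝ) < n := Nat.cast_pos.mpr hn
  have key := Real.geom_mean_le_arith_mean_weighted Finset.univ (fun _ => (n:ℝ)⁻¹) z
    (fun i _ => by positivity) (by simp [Finset.card_univ]; field_simp) (fun i _ => hz i)
  have h1 : ∏ i, z i ^ ((n:ℝ)⁻¹) = (∏ i, z i) ^ ((n:ℝ)⁻¹) := by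
    rw [← Real.finset_prod_rpow _ _ (fun i _ => hz i)]
  have h2 : ∑ i, (n:ℝ)⁻¹ * z i = (∑ i, z i) / n := by
    rw [← Finset.mul_sum]; ring
  rw [h1, h2] at key
  have hprod : (0:ℝ) ≤ ∏ i, z i := Finset.prod_nonneg fun i _ => hz i
  calc ∏ i, z i = ((∏ i, z i) ^ ((n:ℝ)⁻¹)) ^ n := by
        rw [← Real.rpow_natCast ((∏ i, z i) ^ ((n:ℝ)⁻¹)), ← Real.rpow_mul hprod]
        rw [inv_mul_cancel₀ (ne_of_gt hn'), Real.rpow_one]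
    _ ≤ ((∑ i, z i) / n) ^ n :=
        pow_le_pow_left₀ (Real.rpow_nonneg hprod _) key n

private lemma trace_eq_sum_eigenvalues {A : Matrix (Fin n) (Fin n) ℝ} (hA : A.IsHermitian) :
    A.trace = ∑ i, hA.eigenvalues i := by
  simpa using hA.trace_eq_sum_eigenvalues

private lemma psd_det_le (hn : 0 < n) {A : Matrix (Fin n) (Fin n) ℝ} (hA : A.PosSemidef) :
    A.det ≤ (A.trace / n) ^ n := by
  rw [hA.1.det_eq_prod_eigenvalues, trace_eq_sum_eigenvalues hA.1]
  simpa using amgm_aux_s8 hn hA.1.eigenvalues hA.eigenvalues_nonneg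

open scoped MatrixOrder in
private lemma det_mul_det_le (hn : 0 < n) {A B : Matrix (Fin n) (Fin n) ℝ}
    (hA : A.PosSemidef) (hB : B.PosSemidef) :
    A.det * B.det ≤ ((A * B).trace / n) ^ n := by
  set C := CFC.sqrt A with hC
  have hCps : C.PosSemidef := (CFC.sqrt_nonneg A).posSemidef
  have hCH : Cᴴ = C := hCps.1
  have hpsd : (C * B * C).PosSemidef := by
    have := hB.mul_mul_conjTranspose_same C
    rwa [hCH] at this
  have htr : (C * B * C).trace = (A * B).trace := by
    rw [trace_mul_cycle, CFC.sqrt_mul_sqrt_self A hA.nonneg]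
  have hdet : (C * B * C).det = A.det * B.det := by
    rw [Matrix.det_mul, Matrix.det_mul]
    have : C.det * C.det = A.det := by rw [← Matrix.det_mul, CFC.sqrt_mul_sqrt_self A hA.nonneg]
    rw [mul_comm C.det B.det, mul_assoc, this, mul_comm]
  calc A.det * B.det = (C * B * C).det := hdet.symm
    _ ≤ ((C * B * C).trace / n) ^ n := psd_det_le hn hpsd
    _ = ((A * B).trace / n) ^ n := by rw [htr]

private lemma trace_mul_vecMulVec (P : Matrix (Fin n) (Fin n) ℝ) (y : Fin n → ℝ) :
    (P * vecMulVec y y).trace = y ⬝ᵥ (P *ᵥ y) := by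
  simp only [Matrix.trace, Matrix.diag, Matrix.mul_apply, vecMulVec_apply, dotProduct,
    Matrix.mulVec, Finset.mul_sum]
  congr 1; ext i; congr 1; ext j; ring

private lemma hull_trace (P : Matrix (Fin n) (Fin n) ℝ) (s : Set (Matrix (Fin n) (Fin n) ℝ))
    (c : ℝ) (h : ∀ x ∈ s, (P * x).trace = c) :
    ∀ M ∈ convexHull ℝ s, (P * M).trace = c := by
  set f : Matrix (Fin n) (Fin n) ℝ →ₗ[ℝ] ℝ :=
    (Matrix.traceLinearMap (Fin n) ℝ ℝ).comp (LinearMap.mulLeft ℝ P) with hf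
  have hconv : Convex ℝ (f ⁻¹' {c}) := (convex_singleton c).linear_preimage f
  have hsub : s ⊆ f ⁻¹' {c} := fun x hx => h x hx
  intro M hM
  exact convexHull_min hsub hconv hM

private lemma convex_posSemidef : Convex ℝ {M : Matrix (Fin n) (Fin n) ℝ | M.PosSemidef} := by
  intro x hx y hy a b ha hb hab
  constructor
  · have h1 : (a • x).IsHermitian := by
      rw [Matrix.IsHermitian, Matrix.conjTranspose_smul, star_trivial, hx.1]
    have h2 : (b • y).IsHermitian := by
      rw [Matrix.IsHermitian, Matrix.conjTranspose_smul, star_trivial, hy.1]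
    exact h1.add h2
  · exact ((hx.smul ha).add (hy.smul hb)).2

private lemma vecMulVec_posSemidef (y : Fin n → ℝ) : (vecMulVec y y).PosSemidef := by
  constructor
  · ext i j; simp [Matrix.conjTranspose_apply, vecMulVec_apply, mul_comm]
  · have := posSemidef_vecMulVec_self_star y
    rw [star_trivial] at this
    exact this.2

end aux

/-- **Variational characterization of minimal flat tori.** If `(Q, Y)` is a matrix data
(i.e. `Yⱼᵗ Q Yⱼ = 1` for all `j` and `(1/n) Q⁻¹` lies in the convex hull `C_Y` of the
outer products `Yⱼ Yⱼᵗ`), then `Q` maximizes the determinant on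
`W_Y = {P posdef : Yⱼᵗ P Yⱼ = 1 ∀ j}` and `(1/n) Q⁻¹` maximizes the determinant
on `C_Y`. -/
theorem matrix_data_maximizes_det
    (n : ℕ) (hn : 0 < n) (N : ℕ) (Q : Matrix (Fin n) (Fin n) ℝ) (hQ : Q.PosDef)
    (Y : Fin N → Fin n → ℤ)
    (hnorm : ∀ j, (fun i => (Y j i : ℝ)) ⬝ᵥ (Q *ᵥ fun i => (Y j i : ℝ)) = 1)
    (hhull : (n : ℝ)⁻¹ • Q⁻¹ ∈ convexHull ℝ
      (Set.range fun j => vecMulVec (fun i => (Y j i : ℝ)) (fun i => (Y j i : ℝ)))) :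
    (∀ P : Matrix (Fin n) (Fin n) ℝ, P.PosDef →
      (∀ j, (fun i => (Y j i : ℝ)) ⬝ᵥ (P *ᵥ fun i => (Y j i : ℝ)) = 1) →
      P.det ≤ Q.det) ∧
    (∀ M ∈ convexHull ℝ
        (Set.range fun j => vecMulVec (fun i => (Y j i : ℝ)) (fun i => (Y j i : ℝ))),
      Matrix.det M ≤ ((n : ℝ)⁻¹ • Q⁻¹).det) ∧
    ((n : ℝ)⁻¹ • Q⁻¹).det = Q.det⁻¹ / (n : ℝ) ^ n := by
  have hn' : (0:ℝ) < n := Nat.cast_pos.mpr hn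
  have hdetQ : 0 < Q.det := hQ.det_pos
  set S : Set (Matrix (Fin n) (Fin n) ℝ) :=
    Set.range fun j => vecMulVec (fun i => (Y j i : ℝ)) (fun i => (Y j i : ℝ)) with hS
  -- part (iii)
  have hiii : ((n : ℝ)⁻¹ • Q⁻¹).det = Q.det⁻¹ / (n : ℝ) ^ n := by
    rw [Matrix.det_smul, Matrix.det_nonsing_inv, Ring.inverse_eq_inv', Fintype.card_fin]
    rw [inv_pow]
    ring
  refine ⟨?_, ?_, hiii⟩
  · -- part (i)
    intro P hP hPnorm
    have htr1 : (P * ((n : ℝ)⁻¹ • Q⁻¹)).trace = 1 := by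
      refine hull_trace P S 1 ?_ _ hhull
      rintro x ⟨j, rfl⟩
      rw [trace_mul_vecMulVec]
      exact hPnorm j
    have htr : (P * Q⁻¹).trace = n := by
      rw [Matrix.mul_smul, Matrix.trace_smul] at htr1
      have : (P * Q⁻¹).trace = n * 1 := by
        rw [← htr1]; simp [smul_eq_mul]; field_simp
      simpa using this
    have hkey := det_mul_det_le hn hP.posSemidef (hQ.inv).posSemidef
    rw [htr, Matrix.det_nonsing_inv, Ring.inverse_eq_inv'] at hkey
    have h1 : ((n:ℝ) / n) ^ n = 1 := by rw [div_self (ne_of_gt hn'), one_pow]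
    rw [h1] at hkey
    calc P.det = P.det * Q.det⁻¹ * Q.det := by field_simp
      _ ≤ 1 * Q.det := by
          apply mul_le_mul_of_nonneg_right hkey (le_of_lt hdetQ)
      _ = Q.det := one_mul _
  · -- part (ii)
    intro M hM
    have hMpsd : M.PosSemidef := by
      have hsub : S ⊆ {M : Matrix (Fin n) (Fin n) ℝ | M.PosSemidef} := by
        rintro x ⟨j, rfl⟩; exact vecMulVec_posSemidef _
      exact convexHull_min hsub convex_posSemidef hM
    have htr : (Q * M).trace = 1 := by
      refine hull_trace Q S 1 ?_ _ hM
      rintro x ⟨j, rfl⟩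
      rw [trace_mul_vecMulVec]
      exact hnorm j
    have hkey := det_mul_det_le hn hQ.posSemidef hMpsd
    rw [htr] at hkey
    rw [hiii]
    have : M.det ≤ Q.det⁻¹ * (1 / (n:ℝ)) ^ n := by
      rw [← mul_le_mul_iff_right₀ hdetQ]
      calc Q.det * M.det ≤ (1 / (n:ℝ)) ^ n := hkey
        _ = Q.det * (Q.det⁻¹ * (1 / (n:ℝ)) ^ n) := by field_simp
    calc M.det ≤ Q.det⁻¹ * (1 / (n:ℝ)) ^ n := this
      _ = Q.det⁻¹ / (n:ℝ) ^ n := by rw [div_pow, one_pow]; ring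
end

section
/- Let Q be an n×n real symmetric positive definite matrix and Y₁,…,Y_N ∈ ℤⁿ such that: YⱼᵗQYⱼ = 1 for all j; (1/n)Q⁻¹ lies in the convex hull C_Y of {Y₁Y₁ᵗ,…,Y_NY_Nᵗ} and det M ≤ det((1/n)Q⁻¹) for every M ∈ C_Y; and det P ≤ det Q for every n×n symmetric positive definite P with YⱼᵗPYⱼ = 1 for all j. Then every entry of Q is an algebraic number (algebraic over ℚ). In particular, a flat n-torus whose Gram matrix has some transcendental entry admits no minimal isometric immersion into any sphere. -/
set_option maxHeartbeats 4000000
set_option synthInstance.maxHeartbeats 1000000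
open Matrix BigOperators IntermediateField


lemma aux_essFiniteType {F E : Type*} [Field F] [Field E] [Algebra F E]
    (S : Set E) (hS : S.Finite) :
    Algebra.EssFiniteType F (IntermediateField.adjoin F S) := by
  classical
  set L := IntermediateField.adjoin F S with hL
  haveI : Finite S := hS
  set g : S → L := fun x => ⟨x.1, IntermediateField.subset_adjoin F S x.2⟩ with hg
  haveI : Finite (Set.range g) := Set.finite_range g
  rw [Algebra.essFiniteType_iff]
  refine ⟨(Set.finite_range g).toFinset, fun u => ?_⟩
  rw [Set.Finite.coe_toFinset]
  have hval : ∀ r : MvPolynomial S F,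
      (L.val) (MvPolynomial.aeval g r) = MvPolynomial.aeval Subtype.val r := by
    intro r
    have := MvPolynomial.comp_aeval (φ := L.val) (f := g)
    have h2 : (L.val).comp (MvPolynomial.aeval g) = MvPolynomial.aeval (Subtype.val : S → E) := by
      rw [MvPolynomial.comp_aeval]
      congr 1
    exact DFunLike.congr_fun h2 r
  have hmem : ∀ r : MvPolynomial S F,
      MvPolynomial.aeval g r ∈ Algebra.adjoin F (Set.range g) := by
    intro r
    rw [Algebra.adjoin_range_eq_range_aeval]
    exact ⟨r, rfl⟩
  obtain ⟨r, s, hrs⟩ := (IntermediateField.mem_adjoin_iff F (u : E)).mp u.2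
  by_cases hs0 : MvPolynomial.aeval g s = (0 : L)
  · have hu : (u : E) = 0 := by
      rw [hrs]
      have : MvPolynomial.aeval Subtype.val s = (0 : E) := by
        rw [← hval, hs0, map_zero]
      rw [this, div_zero]
    refine ⟨1, Subalgebra.one_mem _, isUnit_one, ?_⟩
    have : u = 0 := Subtype.coe_injective hu
    rw [this, zero_mul]
    exact Subalgebra.zero_mem _
  · refine ⟨MvPolynomial.aeval g s, hmem s, isUnit_iff_ne_zero.mpr hs0, ?_⟩
    have heq : u * MvPolynomial.aeval g s = MvPolynomial.aeval g r := by
      apply Subtype.coe_injective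
      show (u : E) * ((MvPolynomial.aeval g s : L) : E) = ((MvPolynomial.aeval g r : L) : E)
      have e1 : ((MvPolynomial.aeval g s : L) : E) = (L.val) (MvPolynomial.aeval g s) := rfl
      have e2 : ((MvPolynomial.aeval g r : L) : E) = (L.val) (MvPolynomial.aeval g r) := rfl
      rw [e1, e2, hval, hval, hrs, div_mul_cancel₀]
      intro h0
      apply hs0
      have : L.val (MvPolynomial.aeval g s) = L.val 0 := by rw [hval, h0, map_zero]
      exact (L.val).injective this
    rw [heq]; exact hmem r


section
variable {F E : Type} [Field F] [Field E] [Algebra F E]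

/-- A derivation on `adjoin F S` vanishing on (the lifts of) `S` vanishes. -/
lemma aux_derivation_zero {S : Set E} {M : Type*} [AddCommGroup M]
    [Module (IntermediateField.adjoin F S) M] [Module F M]
    [IsScalarTower F (IntermediateField.adjoin F S) M]
    (D : Derivation F (IntermediateField.adjoin F S) M)
    (h : ∀ x (hx : x ∈ S), D ⟨x, IntermediateField.subset_adjoin F S hx⟩ = 0) :
    ∀ y, D y = 0 := by
  classical
  have key : ∀ (x : E) (hx : x ∈ IntermediateField.adjoin F S), D ⟨x, hx⟩ = 0 := by
    intro x hx
    refine IntermediateField.adjoin_induction F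
      (p := fun x hx => D ⟨x, hx⟩ = 0) h ?_ ?_ ?_ ?_ hx
    · intro r
      have : (⟨algebraMap F E r, IntermediateField.algebraMap_mem _ r⟩ :
          IntermediateField.adjoin F S) = algebraMap F (IntermediateField.adjoin F S) r := rfl
      rw [this, Derivation.map_algebraMap]
    · intro x y hx hy h1 h2
      have : (⟨x + y, add_mem hx hy⟩ : IntermediateField.adjoin F S)
          = ⟨x, hx⟩ + ⟨y, hy⟩ := rfl
      rw [this, map_add, h1, h2, add_zero]
    · intro x hx h1
      by_cases h0 : x = 0
      · subst h0
        have : (⟨(0:E)⁻¹, inv_mem hx⟩ : IntermediateField.adjoin F S) = 0 := by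
          apply Subtype.coe_injective; simp
        rw [this, map_zero]
      · have hinv : (⟨x, hx⟩ : IntermediateField.adjoin F S) * ⟨x⁻¹, inv_mem hx⟩ = 1 := by
          apply Subtype.coe_injective
          show x * x⁻¹ = (1 : E)
          exact mul_inv_cancel₀ h0
        have := congrArg D hinv
        rw [Derivation.leibniz, Derivation.map_one_eq_zero, h1, smul_zero, add_zero] at this
        have hx0 : (⟨x, hx⟩ : IntermediateField.adjoin F S) ≠ 0 := by
          intro hc; apply h0; exact congrArg Subtype.val hc
        rcases smul_eq_zero.mp this with h' | h'
        · exact absurd h' hx0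
        · exact h'
    · intro x y hx hy h1 h2
      have : (⟨x * y, mul_mem hx hy⟩ : IntermediateField.adjoin F S)
          = ⟨x, hx⟩ * ⟨y, hy⟩ := rfl
      rw [this, Derivation.leibniz, h1, h2, smul_zero, smul_zero, add_zero]
  intro y
  exact key y.1 y.2

end

/-- If the universal derivation of `adjoin ℚ S` vanishes, the extension is algebraic. -/
lemma aux_isAlgebraic (S : Set ℝ) (hS : S.Finite)
    (h : ∀ x (hx : x ∈ S),
      KaehlerDifferential.D ℚ (IntermediateField.adjoin ℚ S)
        ⟨x, IntermediateField.subset_adjoin ℚ S hx⟩ = 0) :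
    Algebra.IsAlgebraic ℚ (IntermediateField.adjoin ℚ S) := by
  set L := IntermediateField.adjoin ℚ S
  have hD : ∀ y, KaehlerDifferential.D ℚ L y = 0 := aux_derivation_zero _ h
  have hsub : Subsingleton (Ω[L⁄ℚ]) := by
    have hspan := KaehlerDifferential.span_range_derivation ℚ L
    have : Set.range (KaehlerDifferential.D ℚ L) ⊆ {0} := by
      rintro _ ⟨y, rfl⟩; exact hD y
    have htop : (⊤ : Submodule L (Ω[L⁄ℚ])) ≤ ⊥ := by
      rw [← hspan]
      refine Submodule.span_le.mpr ?_
      intro x hx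
      rcases hx with ⟨y, rfl⟩
      simp [hD y]
    constructor
    intro a b
    have ha : a ∈ (⊥ : Submodule L (Ω[L⁄ℚ])) := htop trivial
    have hb : b ∈ (⊥ : Submodule L (Ω[L⁄ℚ])) := htop trivial
    rw [Submodule.mem_bot] at ha hb
    rw [ha, hb]
  haveI : Algebra.FormallyUnramified ℚ L := ⟨hsub⟩
  haveI : Algebra.EssFiniteType ℚ L := aux_essFiniteType S hS
  haveI : Algebra.IsSeparable ℚ L := Algebra.FormallyUnramified.isSeparable ℚ L
  exact Algebra.IsSeparable.isAlgebraic ℚ L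

lemma aux_trace_hermitian_sq_zero {n : ℕ} (M : Matrix (Fin n) (Fin n) ℝ)
    (h : Matrix.trace (Mᴴ * M) = 0) : M = 0 := by
  have hexp : Matrix.trace (Mᴴ * M) = ∑ i, ∑ j, (M j i) ^ 2 := by
    simp only [Matrix.trace, Matrix.diag, Matrix.mul_apply, Matrix.conjTranspose_apply,
      star, sq]
  rw [hexp] at h
  have h1 : ∀ i ∈ Finset.univ, (0:ℝ) ≤ ∑ j, (M j i)^2 :=
    fun i _ => Finset.sum_nonneg fun j _ => sq_nonneg _
  ext j i
  have h2 := (Finset.sum_eq_zero_iff_of_nonneg h1).mp h i (Finset.mem_univ i)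
  have h3 := (Finset.sum_eq_zero_iff_of_nonneg
    (fun j _ => sq_nonneg (M j i))).mp h2 j (Finset.mem_univ j)
  have := pow_eq_zero_iff (n := 2) (by norm_num) |>.mp h3
  simpa using this

lemma aux_gram_det_ne_zero {n : ℕ} {ι : Type*} [Fintype ι] [DecidableEq ι]
    (Q : Matrix (Fin n) (Fin n) ℝ) (hQ : Q.PosDef)
    (b : ι → Matrix (Fin n) (Fin n) ℝ) (hsym : ∀ k, (b k)ᴴ = b k)
    (hli : LinearIndependent ℝ b) :
    (Matrix.of fun k l => Matrix.trace (b k * Q * b l * Q)).det ≠ 0 := by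
  intro hdet
  obtain ⟨γ, hγne, hγ⟩ := (Matrix.exists_mulVec_eq_zero_iff).mpr hdet
  obtain ⟨B, hB⟩ : ∃ B : Matrix (Fin n) (Fin n) ℝ, Q = Bᴴ * B := by
    open scoped MatrixOrder Matrix.Norms.L2Operator in
    exact CStarAlgebra.nonneg_iff_eq_star_mul_self.mp hQ.posSemidef.nonneg
  have hBdet : B.det ≠ 0 := by
    intro h0
    have : Q.det = Bᴴ.det * B.det := by rw [hB, Matrix.det_mul]
    rw [h0, mul_zero] at this
    exact (ne_of_gt hQ.det_pos) this
  have hBHdet : Bᴴ.det ≠ 0 := by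
    rw [Matrix.det_conjTranspose]
    simpa using hBdet
  set S : Matrix (Fin n) (Fin n) ℝ := ∑ k, γ k • b k with hS
  have hSsym : Sᴴ = S := by
    rw [hS, Matrix.conjTranspose_sum]
    refine Finset.sum_congr rfl fun k _ => ?_
    rw [Matrix.conjTranspose_smul, hsym]
    norm_num
  have key0 : Matrix.trace (S * Q * S * Q)
      = ∑ k, γ k * ∑ l, Matrix.trace (b k * Q * b l * Q) * γ l := by
    simp only [hS, Matrix.sum_mul, Matrix.mul_sum, Matrix.smul_mul, Matrix.mul_smul,
      Matrix.trace_sum, Matrix.trace_smul, smul_smul, smul_eq_mul, Finset.mul_sum]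
    rw [Finset.sum_comm]
    refine Finset.sum_congr rfl fun k _ => Finset.sum_congr rfl fun l _ => ?_
    ring
  have hzero : Matrix.trace (S * Q * S * Q) = 0 := by
    rw [key0]
    have : ∀ k, ∑ l, Matrix.trace (b k * Q * b l * Q) * γ l = 0 := by
      intro k
      have := congrFun hγ k
      simpa [Matrix.mulVec, dotProduct] using this
    simp [this]
  set M : Matrix (Fin n) (Fin n) ℝ := B * S * Bᴴ with hM
  have hMsym : Mᴴ = M := by
    rw [hM]
    rw [Matrix.conjTranspose_mul, Matrix.conjTranspose_mul, Matrix.conjTranspose_conjTranspose,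
      hSsym, Matrix.mul_assoc]
  have step1 : S * Q * S * Q = (S * Q * S * Bᴴ) * B := by rw [hB]; noncomm_ring
  have step2 : Mᴴ * M = B * (S * Q * S * Bᴴ) := by rw [hMsym, hM, hB]; noncomm_ring
  have htr : Matrix.trace (Mᴴ * M) = 0 := by
    rw [step2, ← Matrix.trace_mul_comm, ← step1, hzero]
  have hM0 : M = 0 := aux_trace_hermitian_sq_zero M htr
  have hS0 : S = 0 := by
    have hBu : IsUnit B.det := isUnit_iff_ne_zero.mpr hBdet
    have hBHu : IsUnit Bᴴ.det := isUnit_iff_ne_zero.mpr hBHdet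
    have e : B⁻¹ * (B * S * Bᴴ) * (Bᴴ)⁻¹ = (B⁻¹ * B) * S * (Bᴴ * (Bᴴ)⁻¹) := by noncomm_ring
    have : B⁻¹ * M * (Bᴴ)⁻¹ = S := by
      rw [hM, e, Matrix.nonsing_inv_mul _ hBu, Matrix.mul_nonsing_inv _ hBHu, one_mul, mul_one]
    rw [← this, hM0, Matrix.mul_zero, Matrix.zero_mul]
  have hall := Fintype.linearIndependent_iff.mp hli γ (by rw [← hS]; exact hS0)
  exact hγne (funext fun k => hall k)

lemma aux_inv_solve {ι : Type*} [Fintype ι] [DecidableEq ι] {L : Type*} [CommRing L]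
    {W : Type*} [AddCommGroup W] [Module L W] (P X : Matrix ι ι L) (hPX : P * X = 1)
    (g h : ι → W) (hyp : ∀ i, ∑ u, X i u • g u = h i) (a : ι) :
    g a = ∑ i, P a i • h i := by
  have e1 : ∑ i, P a i • h i = ∑ i, P a i • ∑ u, X i u • g u := by
    refine Finset.sum_congr rfl fun i _ => by rw [hyp i]
  rw [e1]
  simp only [Finset.smul_sum, smul_smul]
  rw [Finset.sum_comm]
  have e2 : ∀ u, ∑ i, (P a i * X i u) • g u = ((P * X) a u) • g u := by
    intro u; rw [← Finset.sum_smul, Matrix.mul_apply]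
  symm
  refine Eq.trans (Finset.sum_congr rfl fun u _ => e2 u) ?_
  rw [hPX]
  simp only [Matrix.one_apply, ite_smul, one_smul, zero_smul]
  rw [Finset.sum_ite_eq]
  simp

lemma aux_push {ι κ : Type*} [Fintype ι] [Fintype κ] {L : Type*} [CommRing L] {W : Type*}
    [AddCommGroup W] [Module L W] (f : ι → κ → L) (γ : κ → W) :
    ∑ i, ∑ l, f i l • γ l = ∑ l, (∑ i, f i l) • γ l := by
  rw [Finset.sum_comm]
  exact Finset.sum_congr rfl fun l _ => (Finset.sum_smul).symm

/-- Abstract core: a derivation vanishing on the "rational" data vanishes on the solution. -/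
lemma aux_main {n m R L W : Type*} [Fintype n] [Fintype m] [DecidableEq n] [DecidableEq m]
    [CommRing R] [CommRing L] [Algebra R L] [AddCommGroup W] [Module L W] [Module R W]
    [IsScalarTower R L W]
    (D : Derivation R L W)
    (qc : m → L) (βL : m → n → n → L) (Ql Xl : Matrix n n L)
    (hX : ∀ i u, Xl i u = ∑ k, qc k * βL k i u)
    (hQX : Ql * Xl = 1) (hXQ : Xl * Ql = 1)
    (hR2 : ∀ k, ∑ i, ∑ u, βL k i u * Ql u i = 1)
    (hDβ : ∀ k i u, D (βL k i u) = 0)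
    (hΓdet : IsUnit (Matrix.det (Matrix.of fun k l =>
      ∑ i, ∑ u, ∑ a, ∑ w, βL k i u * (Ql u a * (Ql w i * βL l a w))))) :
    (∀ k, D (qc k) = 0) ∧ (∀ i j, D (Ql i j) = 0) := by
  set γ : m → W := fun k => D (qc k) with hγdef
  set sD : n → n → W := fun i j => D (Ql i j) with hsDdef
  have hDX : ∀ i u, D (Xl i u) = ∑ k, βL k i u • γ k := by
    intro i u
    rw [hX, map_sum]
    refine Finset.sum_congr rfl fun k _ => ?_
    rw [Derivation.leibniz, hDβ, smul_zero, zero_add, hγdef]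
  have hscalar : ∀ i j, ∑ u, Xl i u * Ql u j = if i = j then (1:L) else 0 := by
    intro i j
    have := congrFun (congrFun hXQ i) j
    rwa [Matrix.mul_apply, Matrix.one_apply] at this
  set hvec : n → n → W := (fun i j => -∑ u, Ql u j • ∑ k, βL k i u • γ k) with hhvec
  have E1 : ∀ i j, ∑ u, Xl i u • sD u j = hvec i j := by
    intro i j
    have h0 := congrArg D (hscalar i j)
    rw [map_sum] at h0
    have hr : D (if i = j then (1:L) else 0) = 0 := by split <;> simp
    rw [hr] at h0
    have h1 : ∀ u, D (Xl i u * Ql u j)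
        = Xl i u • sD u j + Ql u j • ∑ k, βL k i u • γ k := by
      intro u
      rw [Derivation.leibniz, hDX]
    rw [Finset.sum_congr rfl (fun u _ => h1 u), Finset.sum_add_distrib] at h0
    have h2 := eq_neg_of_add_eq_zero_left h0
    rw [hhvec]
    exact h2
  have E2 : ∀ k, ∑ i, ∑ u, βL k i u • sD u i = 0 := by
    intro k
    have h0 := congrArg D (hR2 k)
    rw [map_sum, Derivation.map_one_eq_zero] at h0
    have h1 : ∀ i, D (∑ u, βL k i u * Ql u i) = ∑ u, βL k i u • sD u i := by
      intro i
      rw [map_sum]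
      refine Finset.sum_congr rfl fun u _ => ?_
      rw [Derivation.leibniz, hDβ, smul_zero, add_zero]
    rw [Finset.sum_congr rfl (fun i _ => h1 i)] at h0
    exact h0
  have hsolve : ∀ a j, sD a j = ∑ i, Ql a i • hvec i j := fun a j =>
    aux_inv_solve Ql Xl hQX (fun u => sD u j) (fun i => hvec i j) (fun i => E1 i j) a
  -- substitute into E2 and obtain the Gram relation
  have hΓγ : ∀ k, ∑ l, (∑ i, ∑ u, ∑ a, ∑ w, βL k i u * (Ql u a * (Ql w i * βL l a w))) • γ l
      = 0 := by
    intro k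
    have h0 := E2 k
    rw [Finset.sum_congr rfl (fun i _ => Finset.sum_congr rfl (fun u _ => by
      rw [hsolve u i])) ] at h0
    simp only [hhvec, smul_neg, Finset.smul_sum, Finset.sum_neg_distrib, smul_smul] at h0
    rw [neg_eq_zero] at h0
    simp only [aux_push] at h0
    exact h0
  set Γ : Matrix m m L := (Matrix.of fun k l =>
      ∑ i, ∑ u, ∑ a, ∑ w, βL k i u * (Ql u a * (Ql w i * βL l a w))) with hΓdef
  have hγ0 : ∀ l, γ l = 0 := by
    intro a
    have h := aux_inv_solve (Γ⁻¹) Γ (Matrix.nonsing_inv_mul Γ hΓdet) γ (fun _ => 0)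
      (fun kk => by
        simp only [hΓdef, Matrix.of_apply]
        exact hΓγ kk) a
    simpa using h
  have hs0 : ∀ i j, sD i j = 0 := by
    intro a j
    rw [hsolve a j]
    have hz : ∀ i, hvec i j = 0 := by
      intro i
      rw [hhvec]
      simp [hγ0]
    simp [hz]
  exact ⟨hγ0, hs0⟩

lemma aux_trace_expand {n : ℕ} (M P Q : Matrix (Fin n) (Fin n) ℝ) :
    Matrix.trace (M * Q * P * Q) = ∑ x, ∑ u, ∑ a, ∑ w, M x u * (Q u a * (Q w x * P a w)) := by
  have h1 : Matrix.trace (M * Q * P * Q)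
      = ∑ x, ∑ w, ∑ a, ∑ u, (M x u * Q u a) * P a w * Q w x := by
    simp only [Matrix.trace, Matrix.diag_apply, Matrix.mul_apply, Finset.sum_mul]
  rw [h1]
  refine Finset.sum_congr rfl fun x _ => ?_
  calc ∑ w, ∑ a, ∑ u, (M x u * Q u a) * P a w * Q w x
      = ∑ w, ∑ u, ∑ a, (M x u * Q u a) * P a w * Q w x :=
        Finset.sum_congr rfl fun w _ => Finset.sum_comm
    _ = ∑ u, ∑ w, ∑ a, (M x u * Q u a) * P a w * Q w x := Finset.sum_comm
    _ = ∑ u, ∑ a, ∑ w, (M x u * Q u a) * P a w * Q w x :=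
        Finset.sum_congr rfl fun u _ => Finset.sum_comm
    _ = ∑ u, ∑ a, ∑ w, M x u * (Q u a * (Q w x * P a w)) := by
        refine Finset.sum_congr rfl fun u _ => Finset.sum_congr rfl fun a _ =>
          Finset.sum_congr rfl fun w _ => by ring
theorem aux_reduced_main
    (n : ℕ) (hn : 0 < n) (N : ℕ) (Q : Matrix (Fin n) (Fin n) ℝ) (hQ : Q.PosDef)
    (Y : Fin N → Fin n → ℤ)
    (hnorm : ∀ j, (fun i => (Y j i : ℝ)) ⬝ᵥ (Q *ᵥ fun i => (Y j i : ℝ)) = 1)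
    (hhull : (n : ℝ)⁻¹ • Q⁻¹ ∈ convexHull ℝ
      (Set.range fun j => vecMulVec (fun i => (Y j i : ℝ)) (fun i => (Y j i : ℝ)))) :
    ∀ i j, IsAlgebraic ℚ (Q i j) := by
  classical
  set v : Fin N → Fin n → ℝ := fun j i => (Y j i : ℝ) with hv
  set A : Fin N → Matrix (Fin n) (Fin n) ℝ := fun j => vecMulVec (v j) (v j) with hA
  have hdetQ : IsUnit Q.det := isUnit_iff_ne_zero.mpr (ne_of_gt hQ.det_pos)
  -- Q⁻¹ lies in the span of the A j
  have hinv_mem : Q⁻¹ ∈ Submodule.span ℝ (Set.range A) := by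
    have h1 : (n:ℝ)⁻¹ • Q⁻¹ ∈ Submodule.span ℝ (Set.range A) := by
      have hsub : convexHull ℝ (Set.range A) ⊆ (Submodule.span ℝ (Set.range A) : Set _) :=
        convexHull_min Submodule.subset_span (Submodule.span ℝ (Set.range A)).convex
      exact hsub hhull
    have h2 := Submodule.smul_mem (Submodule.span ℝ (Set.range A)) (n:ℝ) h1
    rwa [smul_smul, mul_inv_cancel₀ (by exact_mod_cast hn.ne'), one_smul] at h2
  -- extract a linearly independent spanning subfamily
  obtain ⟨t, hts, hspan, hli⟩ := exists_linearIndependent ℝ (Set.range A)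
  haveI : Fintype t := ((Set.finite_range A).subset hts).fintype
  have hmem' : Q⁻¹ ∈ Submodule.span ℝ (Set.range (Subtype.val : t → Matrix (Fin n) (Fin n) ℝ)) := by
    rw [Subtype.range_coe, hspan]; exact hinv_mem
  obtain ⟨c, hc⟩ := (Submodule.mem_span_range_iff_exists_fun ℝ).mp hmem'
  choose jk hjk using fun k : ↥t => hts k.2
  -- rational entries
  set βq : ↥t → Fin n → Fin n → ℚ := fun k i u => ((Y (jk k) i * Y (jk k) u : ℤ) : ℚ) with hβq
  have hβqv : ∀ (k : ↥t) i u, ((βq k i u : ℚ) : ℝ) = (k : Matrix (Fin n) (Fin n) ℝ) i u := by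
    intro k i u
    rw [← hjk k, hA]
    simp only [vecMulVec_apply, hv, hβq]
    push_cast
    ring
  -- the field of coefficients
  set S : Set ℝ := (Set.range fun k : ↥t => c k) ∪
    (Set.range fun p : Fin n × Fin n => Q p.1 p.2) with hSdef
  have hSfin : S.Finite := (Set.finite_range _).union (Set.finite_range _)
  set L : IntermediateField ℚ ℝ := IntermediateField.adjoin ℚ S with hLdef
  have hcmem : ∀ k : ↥t, c k ∈ L := fun k =>
    IntermediateField.subset_adjoin _ _ (Or.inl ⟨k, rfl⟩)
  have hpmem : ∀ i j, Q i j ∈ L := fun i j =>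
    IntermediateField.subset_adjoin _ _ (Or.inr ⟨(i,j), rfl⟩)
  set qc : ↥t → L := fun k => ⟨c k, hcmem k⟩ with hqc
  set qp : Fin n → Fin n → L := fun i j => ⟨Q i j, hpmem i j⟩ with hqp
  set βL : ↥t → Fin n → Fin n → L := fun k i u => algebraMap ℚ L (βq k i u) with hβL
  have vqc : ∀ k, L.val (qc k) = c k := fun k => rfl
  have vqp : ∀ i j, L.val (qp i j) = Q i j := fun _ _ => rfl
  have vβL : ∀ (k : ↥t) i u, L.val (βL k i u) = (k : Matrix (Fin n) (Fin n) ℝ) i u := by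
    intro k i u
    rw [hβL]
    show L.val (algebraMap ℚ L _) = _
    erw [AlgHom.commutes, eq_ratCast, hβqv]
  -- real identities
  have hXQ : Q⁻¹ * Q = 1 := Matrix.nonsing_inv_mul Q hdetQ
  have hQX : Q * Q⁻¹ = 1 := Matrix.mul_nonsing_inv Q hdetQ
  have hentry : ∀ i u, ∑ k : ↥t, c k * (k : Matrix (Fin n) (Fin n) ℝ) i u = Q⁻¹ i u := by
    intro i u
    rw [← hc]
    rw [Matrix.sum_apply]
    exact Finset.sum_congr rfl fun k _ => by simp
  have real1 : ∀ i j, ∑ u, (∑ k : ↥t, c k * (k : Matrix (Fin n) (Fin n) ℝ) i u) * Q u j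
      = if i = j then (1:ℝ) else 0 := by
    intro i j
    have : ∑ u, (∑ k : ↥t, c k * (k : Matrix (Fin n) (Fin n) ℝ) i u) * Q u j
        = (Q⁻¹ * Q) i j := by
      rw [Matrix.mul_apply]
      exact Finset.sum_congr rfl fun u _ => by rw [hentry]
    rw [this, hXQ, Matrix.one_apply]
  have real1' : ∀ i j, ∑ u, Q i u * (∑ k : ↥t, c k * (k : Matrix (Fin n) (Fin n) ℝ) u j)
      = if i = j then (1:ℝ) else 0 := by
    intro i j
    have : ∑ u, Q i u * (∑ k : ↥t, c k * (k : Matrix (Fin n) (Fin n) ℝ) u j)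
        = (Q * Q⁻¹) i j := by
      rw [Matrix.mul_apply]
      exact Finset.sum_congr rfl fun u _ => by rw [hentry]
    rw [this, hQX, Matrix.one_apply]
  have real2 : ∀ k : ↥t, ∑ i, ∑ u, (k : Matrix (Fin n) (Fin n) ℝ) i u * Q u i = 1 := by
    intro k
    rw [← hjk k]
    have hn' := hnorm (jk k)
    have : ∑ i, ∑ u, (A (jk k)) i u * Q u i
        = ∑ i, v (jk k) i * ∑ u, Q i u * v (jk k) u := by
      rw [Finset.sum_comm]
      refine Finset.sum_congr rfl fun u _ => ?_
      rw [Finset.mul_sum]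
      refine Finset.sum_congr rfl fun i _ => ?_
      rw [hA]
      simp only [vecMulVec_apply]
      ring
    rw [this]
    simpa [dotProduct, Matrix.mulVec, hv] using hn'
  have hcoe_sum : ∀ {ι : Type} [Fintype ι] (f : ι → L),
      ((∑ x, f x : L) : ℝ) = ∑ x, ((f x : L) : ℝ) := by
    intro ι _ f
    exact map_sum L.val f Finset.univ
  have hcoe_mul : ∀ x y : L, ((x * y : L) : ℝ) = (x : ℝ) * (y : ℝ) := fun x y => rfl
  have hcoe_alg : ∀ q : ℚ, ((algebraMap ℚ L q : L) : ℝ) = (q : ℝ) := by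
    intro q
    have h1 : ((algebraMap ℚ L q : L) : ℝ) = L.val (algebraMap ℚ L q) := rfl
    erw [h1, AlgHom.commutes, eq_ratCast]
  have hLinj : Function.Injective (fun x : L => (x : ℝ)) := Subtype.coe_injective
  have vβL : ∀ (k : ↥t) i u, ((βL k i u : L) : ℝ) = (k : Matrix (Fin n) (Fin n) ℝ) i u := by
    intro k i u
    rw [hβL, hcoe_alg, hβqv]
  -- relations in L
  have R1 : ∀ i j, ∑ u, (∑ k : ↥t, qc k * βL k i u) * qp u j = if i = j then (1:L) else 0 := by
    intro i j
    apply hLinj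
    show ((∑ u, (∑ k : ↥t, qc k * βL k i u) * qp u j : L) : ℝ) = _
    rw [hcoe_sum]
    have e : ∀ u, (((∑ k : ↥t, qc k * βL k i u) * qp u j : L) : ℝ)
        = (∑ k : ↥t, c k * (k : Matrix (Fin n) (Fin n) ℝ) i u) * Q u j := by
      intro u
      rw [hcoe_mul, hcoe_sum]
      congr 1
      exact Finset.sum_congr rfl fun k _ => by rw [hcoe_mul, vβL]
    rw [Finset.sum_congr rfl fun u _ => e u, real1 i j]
    by_cases h : i = j <;> simp [h]
  have R1' : ∀ i j, ∑ u, qp i u * (∑ k : ↥t, qc k * βL k u j) = if i = j then (1:L) else 0 := by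
    intro i j
    apply hLinj
    show ((∑ u, qp i u * (∑ k : ↥t, qc k * βL k u j) : L) : ℝ) = _
    rw [hcoe_sum]
    have e : ∀ u, ((qp i u * (∑ k : ↥t, qc k * βL k u j) : L) : ℝ)
        = Q i u * (∑ k : ↥t, c k * (k : Matrix (Fin n) (Fin n) ℝ) u j) := by
      intro u
      rw [hcoe_mul, hcoe_sum]
      congr 1
      exact Finset.sum_congr rfl fun k _ => by rw [hcoe_mul, vβL]
    rw [Finset.sum_congr rfl fun u _ => e u, real1' i j]
    by_cases h : i = j <;> simp [h]
  have R2 : ∀ k : ↥t, ∑ i, ∑ u, βL k i u * qp u i = (1:L) := by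
    intro k
    apply hLinj
    show ((∑ i, ∑ u, βL k i u * qp u i : L) : ℝ) = _
    rw [hcoe_sum]
    have e : ∀ i, ((∑ u, βL k i u * qp u i : L) : ℝ)
        = ∑ u, (k : Matrix (Fin n) (Fin n) ℝ) i u * Q u i := by
      intro i
      rw [hcoe_sum]
      exact Finset.sum_congr rfl fun u _ => by rw [hcoe_mul, vβL]
    rw [Finset.sum_congr rfl fun i _ => e i, real2 k]
    rfl
  -- matrices over L
  set Ql : Matrix (Fin n) (Fin n) L := Matrix.of qp with hQl
  set Xl : Matrix (Fin n) (Fin n) L := Matrix.of (fun i u => ∑ k : ↥t, qc k * βL k i u) with hXl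
  have vqp : ∀ i j, ((qp i j : L) : ℝ) = Q i j := fun _ _ => rfl
  have hQXl : Ql * Xl = 1 := by
    refine Matrix.ext fun i j => ?_
    rw [Matrix.mul_apply, Matrix.one_apply]
    simp only [hQl, hXl, Matrix.of_apply]
    exact R1' i j
  have hXQl : Xl * Ql = 1 := by
    refine Matrix.ext fun i j => ?_
    rw [Matrix.mul_apply, Matrix.one_apply]
    simp only [hQl, hXl, Matrix.of_apply]
    exact R1 i j
  have hR2' : ∀ k : ↥t, ∑ i, ∑ u, βL k i u * Ql u i = 1 := by
    intro k
    simp only [hQl, Matrix.of_apply]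
    exact R2 k
  -- Gram determinant is a unit in L
  have hsym : ∀ k : ↥t, (k : Matrix (Fin n) (Fin n) ℝ)ᴴ = (k : Matrix (Fin n) (Fin n) ℝ) := by
    intro k
    rw [← hjk k, hA]
    refine Matrix.ext fun i j => ?_
    simp only [Matrix.conjTranspose_apply, vecMulVec_apply, star_trivial]
    ring
  have hgram := aux_gram_det_ne_zero Q hQ (Subtype.val : ↥t → Matrix (Fin n) (Fin n) ℝ)
    hsym hli
  set Γl : Matrix ↥t ↥t L := (Matrix.of fun k l =>
      ∑ i, ∑ u, ∑ a, ∑ w, βL k i u * (Ql u a * (Ql w i * βL l a w))) with hΓl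
  have hΓmap : Γl.map (⇑(L.val.toRingHom))
      = (Matrix.of fun k l : ↥t => Matrix.trace ((k : Matrix (Fin n) (Fin n) ℝ) * Q *
          (l : Matrix (Fin n) (Fin n) ℝ) * Q)) := by
    refine Matrix.ext fun k l => ?_
    rw [Matrix.map_apply]
    show ((Γl k l : L) : ℝ) = _
    simp only [hΓl, Matrix.of_apply, hQl]
    rw [aux_trace_expand]
    simp only [hcoe_sum, hcoe_mul, vβL, vqp]
  have hΓdet : IsUnit Γl.det := by
    rw [isUnit_iff_ne_zero]
    intro h0
    have : (Γl.map (⇑(L.val.toRingHom))).det ≠ 0 := by rw [hΓmap]; exact hgram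
    apply this
    rw [← RingHom.mapMatrix_apply, ← RingHom.map_det, h0, map_zero]
  -- apply the abstract core lemma
  obtain ⟨hγ0, hs0⟩ := aux_main (KaehlerDifferential.D ℚ L) qc βL Ql Xl
    (fun i u => by simp only [hXl, Matrix.of_apply]) hQXl hXQl hR2'
    (fun k i u => by rw [hβL]; exact Derivation.map_algebraMap _ _)
    (by rw [hΓl] at hΓdet; exact hΓdet)
  -- the derivation kills the generators, hence L/ℚ is algebraic
  have hgen : ∀ x (hx : x ∈ S),
      KaehlerDifferential.D ℚ (IntermediateField.adjoin ℚ S)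
        ⟨x, IntermediateField.subset_adjoin ℚ S hx⟩ = 0 := by
    intro x hx
    rcases hx with ⟨k, rfl⟩ | ⟨p, rfl⟩
    · exact hγ0 k
    · exact hs0 p.1 p.2
  have halg := aux_isAlgebraic S hSfin hgen
  intro i j
  have h1 : IsAlgebraic ℚ (⟨Q i j, hpmem i j⟩ : L) := Algebra.IsAlgebraic.isAlgebraic _
  exact (IntermediateField.isAlgebraic_iff).mp h1


/-- **Algebraicity of Gram matrices of minimal flat `n`-tori.** If `(Q, Y)` is the
matrix data of a minimal isometric immersion of a flat `n`-torus into a sphere, then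
every entry of `Q` is algebraic over `ℚ`. -/
theorem gram_matrix_entries_algebraic
    (n : ℕ) (hn : 0 < n) (N : ℕ) (Q : Matrix (Fin n) (Fin n) ℝ) (hQ : Q.PosDef)
    (Y : Fin N → Fin n → ℤ)
    (hnorm : ∀ j, (fun i => (Y j i : ℝ)) ⬝ᵥ (Q *ᵥ fun i => (Y j i : ℝ)) = 1)
    (hhull : (n : ℝ)⁻¹ • Q⁻¹ ∈ convexHull ℝ
      (Set.range fun j => vecMulVec (fun i => (Y j i : ℝ)) (fun i => (Y j i : ℝ))))
    (hmaxhull : ∀ M ∈ convexHull ℝ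
      (Set.range fun j => vecMulVec (fun i => (Y j i : ℝ)) (fun i => (Y j i : ℝ))),
      Matrix.det M ≤ ((n : ℝ)⁻¹ • Q⁻¹).det)
    (hmax : ∀ P : Matrix (Fin n) (Fin n) ℝ, P.PosDef →
      (∀ j, (fun i => (Y j i : ℝ)) ⬝ᵥ (P *ᵥ fun i => (Y j i : ℝ)) = 1) →
      P.det ≤ Q.det) :
    ∀ i j, IsAlgebraic ℚ (Q i j) := by
  exact aux_reduced_main n hn N Q hQ Y hnorm hhull
end

section
/- Let Y be an n×n matrix with integer entries. Then the following are equivalent: (i) for every u ∈ ℝⁿ with |uᵢ| < 1 for all i, if every entry of uᵗY is an integer then u = 0; (ii) det Y = 1 or det Y = −1. (Via Minkowski's first convex body theorem: for N = n, the homogeneous minimal flat n-torus determined by the square frequency matrix Y is embedded if and only if det Y = ±1.) -/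
open Matrix BigOperators

/-- **Embeddedness criterion for a square frequency matrix, via Minkowski's first convex
body theorem.** For an `n × n` integer matrix `Y`, the only point `u` of the open cube
`(−1, 1)ⁿ` with `uᵗ Y` integral is `u = 0` if and only if `det Y = ±1`. -/
theorem embedding_iff_unimodular
    (n : ℕ) (Y : Matrix (Fin n) (Fin n) ℤ) :
    (∀ u : Fin n → ℝ, (∀ i, |u i| < 1) →
      (∀ j : Fin n, ∃ z : ℤ, (∑ i, u i * (Y i j : ℝ)) = (z : ℝ)) →
      u = 0)
    ↔ (Y.det = 1 ∨ Y.det = -1) := by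
  set A : Matrix (Fin n) (Fin n) ℝ := ((Int.castRingHom ℝ).mapMatrix Y : Matrix (Fin n) (Fin n) ℝ) with hAdef
  have hAdet : A.det = (Y.det : ℝ) := (RingHom.map_det (Int.castRingHom ℝ) Y).symm
  have hAapp : ∀ i j, A i j = (Y i j : ℝ) := fun i j => rfl
  constructor
  · intro H
    -- Step 1: det Y ≠ 0
    have hdet0 : Y.det ≠ 0 := by
      intro h0
      have hA0 : A.det = 0 := by rw [hAdet, h0]; simp
      obtain ⟨v, hv0, hv⟩ := Matrix.exists_vecMul_eq_zero_iff.mpr hA0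
      set c : ℝ := (∑ i, |v i|) + 1 with hc
      have hcpos : 0 < c := by
        have : (0:ℝ) ≤ ∑ i, |v i| := Finset.sum_nonneg fun i _ => abs_nonneg _
        linarith
      have hle : ∀ i, |v i| ≤ ∑ i, |v i| := by
        intro i
        exact Finset.single_le_sum (fun i _ => abs_nonneg (v i)) (Finset.mem_univ i)
      set u : Fin n → ℝ := fun i => v i / c with hu
      have h1 : ∀ i, |u i| < 1 := by
        intro i
        rw [hu]
        simp only [abs_div, abs_of_pos hcpos]
        rw [div_lt_one hcpos]
        have := hle i
        linarith
      have h2 : ∀ j : Fin n, ∃ z : ℤ, (∑ i, u i * (Y i j : ℝ)) = (z : ℝ) := by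
        intro j
        refine ⟨0, ?_⟩
        have hvj : ∑ i, v i * (Y i j : ℝ) = 0 := by
          have := congrFun hv j
          simpa [Matrix.vecMul, dotProduct, hAapp] using this
        have : ∑ i, u i * (Y i j : ℝ) = (∑ i, v i * (Y i j : ℝ)) / c := by
          rw [Finset.sum_div]
          refine Finset.sum_congr rfl fun i _ => ?_
          rw [hu]; ring
        rw [this, hvj]; simp
      have := H u h1 h2
      apply hv0
      funext i
      have : u i = 0 := congrFun this i
      have := (div_eq_zero_iff.mp this)
      rcases this with h | h
      · exact h
      · exact absurd h (ne_of_gt hcpos)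
    -- Step 2: A is invertible, rows of A⁻¹ are integral
    have hAunit : IsUnit A.det := by
      rw [hAdet]
      exact isUnit_iff_ne_zero.mpr (by exact_mod_cast hdet0)
    have hAinv : A⁻¹ * A = 1 := Matrix.nonsing_inv_mul A hAunit
    have hrow : ∀ j i, A⁻¹ j i = (round (A⁻¹ j i) : ℝ) := by
      intro j i
      set u : Fin n → ℝ := fun i => A⁻¹ j i - round (A⁻¹ j i) with hu
      have h1 : ∀ i, |u i| < 1 := fun i =>
        lt_of_le_of_lt (abs_sub_round (A⁻¹ j i)) (by norm_num)
      have h2 : ∀ k : Fin n, ∃ z : ℤ, (∑ i, u i * (Y i k : ℝ)) = (z : ℝ) := by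
        intro k
        refine ⟨(if j = k then 1 else 0) - ∑ i, round (A⁻¹ j i) * Y i k, ?_⟩
        have hsum : ∑ i, u i * (Y i k : ℝ)
            = (∑ i, A⁻¹ j i * A i k) - ∑ i, (round (A⁻¹ j i) : ℝ) * (Y i k : ℝ) := by
          rw [← Finset.sum_sub_distrib]
          refine Finset.sum_congr rfl fun i _ => ?_
          rw [hu, hAapp]; ring
        have hone : ∑ i, A⁻¹ j i * A i k = ((1 : Matrix (Fin n) (Fin n) ℝ) j k) := by
          rw [← Matrix.mul_apply, hAinv]
        rw [hsum, hone, Matrix.one_apply]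
        push_cast
        by_cases h : j = k <;> simp [h]
      have := H u h1 h2
      have : u i = 0 := congrFun this i
      rw [hu] at this
      linarith [this]
    set B : Matrix (Fin n) (Fin n) ℤ := fun j i => round (A⁻¹ j i) with hB
    have hBA : A⁻¹ = (Int.castRingHom ℝ).mapMatrix B := by
      ext j i
      simp only [RingHom.mapMatrix_apply, Matrix.map_apply, hB]
      exact hrow j i
    have hdetmul : Y.det * B.det = 1 := by
      have h1 : A⁻¹.det * A.det = 1 := by
        rw [← Matrix.det_mul, hAinv, Matrix.det_one]
      rw [hBA, hAdet] at h1
      rw [← RingHom.map_det] at h1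
      have : ((B.det * Y.det : ℤ) : ℝ) = ((1 : ℤ) : ℝ) := by rw [Int.cast_mul, Int.cast_one]; exact h1
      have := Int.cast_injective this
      linarith [this, mul_comm B.det Y.det]
    exact Int.isUnit_iff.mp (IsUnit.of_mul_eq_one _ hdetmul)
  · intro hd u h1 h2
    have hu : IsUnit Y.det := Int.isUnit_iff.mpr hd
    have hYinv : Y * Y⁻¹ = 1 := Matrix.mul_nonsing_inv Y hu
    choose z hz using h2
    funext k
    have key : u k = ((∑ j, z j * Y⁻¹ j k : ℤ) : ℝ) := by
      push_cast
      calc u k = ∑ i, u i * ((Y * Y⁻¹) i k : ℝ) := by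
            rw [hYinv]
            simp [Matrix.one_apply, Finset.sum_ite_eq']
        _ = ∑ i, u i * ∑ j, (Y i j : ℝ) * (Y⁻¹ j k : ℝ) := by
            refine Finset.sum_congr rfl fun i _ => ?_
            rw [Matrix.mul_apply]; push_cast; ring
        _ = ∑ j, (∑ i, u i * (Y i j : ℝ)) * (Y⁻¹ j k : ℝ) := by
            simp_rw [Finset.mul_sum, Finset.sum_mul]
            rw [Finset.sum_comm]
            exact Finset.sum_congr rfl fun j _ => Finset.sum_congr rfl fun i _ => by ring
        _ = ∑ j, (z j : ℝ) * (Y⁻¹ j k : ℝ) := by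
            refine Finset.sum_congr rfl fun j _ => by rw [hz j]
    have habs : |(∑ j, z j * Y⁻¹ j k : ℤ)| < 1 := by
      have := h1 k
      rw [key] at this
      exact_mod_cast this
    have : (∑ j, z j * Y⁻¹ j k : ℤ) = 0 := by rw [abs_lt] at habs; omega
    rw [key, this]
    simp
end
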